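/- arXiv:math/0611860 — 3 statements merged into one kernel-verified Lean document; each statement's English description precedes it below -/
import Mathlib

section
/- For every real number α ∈ [0,1] there exists a unique Borel probability measure ν on [0,∞) such that ν([0,1]) = 1−α, ν([1,∞)) = α, and for every Stern-Brocot interval I of rank r ≥ 1, the ν-measure of the intersection of the left sub-interval of I with [0,∞) equals α·ν(I ∩ [0,∞)) if r is odd and (1−α)·ν(I ∩ [0,∞)) if r is even. -/
open MeasureTheory Filter Set Topology
open Function
open scoped ENNReal

noncomputable section

/-- Endpoints (as pairs of nonnegative integers, `(a,b)` representing `a/b`, with `1/0 = ∞`)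
of the Stern-Brocot interval obtained from `[0/1, 1/0]` by following the list of choices `w`
(`true` = left sub-interval, `false` = right sub-interval). -/
def sbGo : (ℕ × ℕ) × (ℕ × ℕ) → List Bool → (ℕ × ℕ) × (ℕ × ℕ)
  | I, [] => I
  | ((a, b), (c, d)), (lft :: w) =>
      if lft then sbGo ((a, b), (a + c, b + d)) w else sbGo ((a + c, b + d), (c, d)) w

/-- The Stern-Brocot interval of rank `w.length` indexed by the list of choices `w`. -/
def sb (w : List Bool) : (ℕ × ℕ) × (ℕ × ℕ) := sbGo ((0, 1), (1, 0)) w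

/-- The intersection of a Stern-Brocot interval with `[0, ∞)`, as a subset of `ℝ`. -/
def sbSet : (ℕ × ℕ) × (ℕ × ℕ) → Set ℝ
  | ((a, b), (c, d)) =>
      if d = 0 then Set.Ici ((a : ℝ) / (b : ℝ))
      else Set.Icc ((a : ℝ) / (b : ℝ)) ((c : ℝ) / (d : ℝ))

/-- `ν` is the measure `ν_α`: a Borel probability measure on `[0,∞)` (viewed as a measure on `ℝ`
giving no mass to `(-∞,0)`) with `ν([0,1]) = 1 - α`, `ν([1,∞)) = α`, and such that for every
Stern-Brocot interval `I` of rank `r ≥ 1`, the left sub-interval of `I` carries a proportion `α`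
of the mass of `I` if `r` is odd and `1 - α` if `r` is even. -/
def IsSternBrocotMeasure (α : ℝ) (ν : Measure ℝ) : Prop :=
  IsProbabilityMeasure ν ∧
  ν (Set.Iio 0) = 0 ∧
  ν (Set.Icc 0 1) = ENNReal.ofReal (1 - α) ∧
  ν (Set.Ici 1) = ENNReal.ofReal α ∧
  ∀ w : List Bool, 1 ≤ w.length →
    ν (sbSet (sb (w ++ [true]))) =
      (if Odd w.length then ENNReal.ofReal α else ENNReal.ofReal (1 - α)) * ν (sbSet (sb w))

namespace SBAux

structure St where
  a : ℕ
  b : ℕ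
  c : ℕ
  d : ℕ
  f : ℝ
  p : ℝ

def g (α : ℝ) (n : ℕ) : ℝ := if Odd n then α else 1 - α

def St.l (s : St) : ℝ := (s.a : ℝ) / (s.b : ℝ)
def St.r (s : St) : ℝ := (s.c : ℝ) / (s.d : ℝ)
def St.med (s : St) : ℝ := ((s.a + s.c : ℕ) : ℝ) / ((s.b + s.d : ℕ) : ℝ)

def wstep (α : ℝ) (n : ℕ) : Bool → St → St
  | true, s => ⟨s.a, s.b, s.a + s.c, s.b + s.d, s.f, g α n * s.p⟩
  | false, s => ⟨s.a + s.c, s.b + s.d, s.c, s.d, s.f + g α n * s.p, (1 - g α n) * s.p⟩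

def stGo (α : ℝ) : ℕ → St → List Bool → St
  | _, s, [] => s
  | n, s, lft :: w => stGo α (n + 1) (wstep α n lft s) w

def init : St := ⟨0, 1, 1, 0, 0, 1⟩

def stW (α : ℝ) (w : List Bool) : St := stGo α 0 init w

def proj (s : St) : (ℕ × ℕ) × (ℕ × ℕ) := ((s.a, s.b), (s.c, s.d))

theorem stGo_append (α : ℝ) (u v : List Bool) :
    ∀ (n : ℕ) (s : St), stGo α n s (u ++ v) = stGo α (n + u.length) (stGo α n s u) v := by
  induction u with
  | nil => intro n s; simp [stGo]
  | cons b u ih =>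
      intro n s
      rw [show stGo α n s ((b :: u) ++ v) = stGo α (n+1) (wstep α n b s) (u ++ v) from rfl,
        ih (n+1), show n + (b :: u).length = (n+1) + u.length by simp; omega]
      rfl

theorem proj_stGo (α : ℝ) (w : List Bool) :
    ∀ (n : ℕ) (s : St), sbGo (proj s) w = proj (stGo α n s w) := by
  induction w with
  | nil => intro n s; rfl
  | cons b w ih =>
      intro n s
      cases b
      · simpa [sbGo, stGo, proj, wstep] using ih (n+1) (wstep α n false s)
      · simpa [sbGo, stGo, proj, wstep] using ih (n+1) (wstep α n true s)

theorem sb_eq_proj (α : ℝ) (w : List Bool) : sb w = proj (stW α w) := proj_stGo α w 0 init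

theorem stW_append_singleton (α : ℝ) (w : List Bool) (b : Bool) :
    stW α (w ++ [b]) = wstep α w.length b (stW α w) := by
  simp [stW, stGo_append, stGo]

structure Inv (s : St) : Prop where
  hb : 1 ≤ s.b
  hc : 1 ≤ s.c
  det : s.b * s.c = s.a * s.d + 1
  hf : 0 ≤ s.f
  hp : 0 ≤ s.p
  hfp : s.f + s.p ≤ 1
  hspine : s.d = 0 → s.f + s.p = 1

variable {α : ℝ}

theorem g_nonneg (hα0 : 0 ≤ α) (hα1 : α ≤ 1) (n : ℕ) : 0 ≤ g α n := by
  unfold g; split <;> linarith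

theorem g_le_one (hα0 : 0 ≤ α) (hα1 : α ≤ 1) (n : ℕ) : g α n ≤ 1 := by
  unfold g; split <;> linarith

theorem one_sub_g (n : ℕ) : 1 - g α n = g α (n + 1) := by
  unfold g
  rcases Nat.even_or_odd n with h | h
  · rw [if_neg (by simpa using h), if_pos (Even.add_one h)]; ring
  · rw [if_pos h, if_neg (by simpa using Odd.add_one h)]

theorem g_mul_g (n : ℕ) : g α n * g α (n + 1) = α * (1 - α) := by
  unfold g
  rcases Nat.even_or_odd n with h | h
  · rw [if_neg (by simpa using h), if_pos (Even.add_one h)]; ring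
  · rw [if_pos h, if_neg (by simpa using Odd.add_one h)]

theorem inv_wstep (hα0 : 0 ≤ α) (hα1 : α ≤ 1) {s : St} (n : ℕ) (lft : Bool) (h : Inv s) :
    Inv (wstep α n lft s) := by
  have h0 := g_nonneg hα0 hα1 n
  have h1 := g_le_one hα0 hα1 n
  obtain ⟨hb, hc, det, hf, hp, hfp, hsp⟩ := h
  have hgp : 0 ≤ g α n * s.p := mul_nonneg h0 hp
  have hgp2 : 0 ≤ (1 - g α n) * s.p := mul_nonneg (by linarith) hp
  cases lft
  · exact ⟨by dsimp [wstep]; omega, by dsimp [wstep]; omega,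
      by dsimp [wstep]; zify at det ⊢; linear_combination det,
      by dsimp [wstep]; linarith,
      by dsimp [wstep]; linarith,
      by dsimp [wstep]; nlinarith,
      fun hd => by
        dsimp [wstep] at hd ⊢
        linear_combination hsp hd⟩
  · refine ⟨by dsimp [wstep]; omega, by dsimp [wstep]; omega,
      by dsimp [wstep]; zify at det ⊢; linear_combination det,
      by dsimp [wstep]; linarith,
      by dsimp [wstep]; linarith,
      by dsimp [wstep]; nlinarith,
      fun hd => by dsimp [wstep] at hd; omega⟩

theorem Inv.bpos {s : St} (h : Inv s) : (0:ℝ) < (s.b:ℝ) := by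
  have := h.hb; exact_mod_cast Nat.lt_of_lt_of_le Nat.zero_lt_one this

theorem Inv.bdpos {s : St} (h : Inv s) : (0:ℝ) < ((s.b + s.d : ℕ):ℝ) := by
  have := h.hb; exact_mod_cast (by omega : 0 < s.b + s.d)

theorem Inv.detR {s : St} (h : Inv s) : (s.b:ℝ) * s.c = (s.a:ℝ) * s.d + 1 := by
  exact_mod_cast h.det

theorem Inv.l_nonneg {s : St} (h : Inv s) : 0 ≤ s.l :=
  div_nonneg (Nat.cast_nonneg _) (Nat.cast_nonneg _)

theorem Inv.l_lt_med {s : St} (h : Inv s) : s.l < s.med := by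
  rw [St.l, St.med, div_lt_div_iff₀ h.bpos h.bdpos]
  have := h.detR
  push_cast
  nlinarith [this]

theorem Inv.med_lt_r {s : St} (h : Inv s) (hd : s.d ≠ 0) : s.med < s.r := by
  have hdpos : (0:ℝ) < (s.d:ℝ) := by exact_mod_cast Nat.pos_of_ne_zero hd
  rw [St.med, St.r, div_lt_div_iff₀ h.bdpos hdpos]
  have := h.detR
  push_cast
  nlinarith [this]

theorem Inv.l_lt_r {s : St} (h : Inv s) (hd : s.d ≠ 0) : s.l < s.r :=
  lt_trans h.l_lt_med (h.med_lt_r hd)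

theorem Inv.med_nonneg {s : St} (h : Inv s) : 0 ≤ s.med :=
  le_of_lt (lt_of_le_of_lt h.l_nonneg h.l_lt_med)

/-! ### the path of a point -/

def pathSt (α x : ℝ) : ℕ → St
  | 0 => init
  | n + 1 => wstep α n (decide (x ≤ (pathSt α x n).med)) (pathSt α x n)

def xword (α x : ℝ) : ℕ → List Bool
  | 0 => []
  | n + 1 => xword α x n ++ [decide (x ≤ (pathSt α x n).med)]

theorem xword_length (α x : ℝ) (n : ℕ) : (xword α x n).length = n := by
  induction n with
  | zero => rfl
  | succ n ih => simp [xword, ih]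

theorem pathSt_eq_stW (α x : ℝ) (n : ℕ) : pathSt α x n = stW α (xword α x n) := by
  induction n with
  | zero => rfl
  | succ n ih =>
      rw [pathSt, xword, stW_append_singleton, xword_length, ih]

theorem inv_init : Inv init :=
  ⟨le_refl 1, le_refl 1, by norm_num [init], le_refl 0, zero_le_one, by norm_num [init],
    fun _ => by norm_num [init]⟩

variable (hα0 : 0 ≤ α) (hα1 : α ≤ 1)

include hα0 hα1

theorem inv_stGo (w : List Bool) : ∀ (n : ℕ) (s : St), Inv s → Inv (stGo α n s w) := by
  induction w with
  | nil => intro n s hs; exact hs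
  | cons b w ih => intro n s hs; exact ih (n+1) _ (inv_wstep hα0 hα1 n b hs)

theorem inv_stW (w : List Bool) : Inv (stW α w) := inv_stGo hα0 hα1 w 0 init inv_init

theorem inv_pathSt (x : ℝ) (n : ℕ) : Inv (pathSt α x n) := by
  induction n with
  | zero => exact inv_init
  | succ n ih => exact inv_wstep hα0 hα1 n _ ih

/-! ### G and F -/

omit hα0 hα1

def G (α x : ℝ) (n : ℕ) : ℝ := (pathSt α x n).f + (pathSt α x n).p

def F (α : ℝ) (x : ℝ) : ℝ := ⨅ n, G α x n

include hα0 hα1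

theorem G_nonneg (x : ℝ) (n : ℕ) : 0 ≤ G α x n := by
  have h := inv_pathSt hα0 hα1 x n
  exact add_nonneg h.hf h.hp

theorem bddBelow_G (x : ℝ) : BddBelow (Set.range (G α x)) :=
  ⟨0, by rintro _ ⟨n, rfl⟩; exact G_nonneg hα0 hα1 x n⟩

theorem G_succ_le (x : ℝ) (n : ℕ) : G α x (n+1) ≤ G α x n := by
  have h := inv_pathSt hα0 hα1 x n
  have h0 := g_nonneg hα0 hα1 n
  have h1 := g_le_one hα0 hα1 n
  unfold G
  rw [pathSt]
  rcases Bool.eq_false_or_eq_true (decide (x ≤ (pathSt α x n).med)) with hb | hb <;>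
    rw [hb] <;> dsimp [wstep] <;> nlinarith [h.hp, h.hf]

theorem G_antitone (x : ℝ) : Antitone (G α x) :=
  antitone_nat_of_succ_le (G_succ_le hα0 hα1 x)

theorem F_le_G (x : ℝ) (n : ℕ) : F α x ≤ G α x n := ciInf_le (bddBelow_G hα0 hα1 x) n

theorem F_nonneg (x : ℝ) : 0 ≤ F α x := le_ciInf (G_nonneg hα0 hα1 x)

theorem G_le_one (x : ℝ) (n : ℕ) : G α x n ≤ 1 := (inv_pathSt hα0 hα1 x n).hfp

theorem F_le_one (x : ℝ) : F α x ≤ 1 := le_trans (F_le_G hα0 hα1 x 0) (by norm_num [G, pathSt, init])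

theorem f_mono (x : ℝ) : Monotone (fun n => (pathSt α x n).f) := by
  apply monotone_nat_of_le_succ
  intro n
  have h := inv_pathSt hα0 hα1 x n
  have h0 := g_nonneg hα0 hα1 n
  rw [pathSt]
  rcases Bool.eq_false_or_eq_true (decide (x ≤ (pathSt α x n).med)) with hb | hb <;>
    rw [hb] <;> dsimp [wstep] <;> nlinarith [h.hp]

theorem f_le_F (x : ℝ) (k : ℕ) : (pathSt α x k).f ≤ F α x := by
  apply le_ciInf
  intro n
  rcases le_total n k with h | h
  · calc (pathSt α x k).f ≤ G α x k := le_add_of_nonneg_right (inv_pathSt hα0 hα1 x k).hp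
      _ ≤ G α x n := G_antitone hα0 hα1 x h
  · calc (pathSt α x k).f ≤ (pathSt α x n).f := f_mono hα0 hα1 x h
      _ ≤ G α x n := le_add_of_nonneg_right (inv_pathSt hα0 hα1 x n).hp

theorem F_mono : Monotone (F α) := by
  intro x y hxy
  have key : ∀ n, pathSt α x n = pathSt α y n ∨ F α x ≤ (pathSt α y n).f := by
    intro n
    induction n with
    | zero => exact Or.inl rfl
    | succ n ih =>
        rcases ih with heq | hle
        · by_cases hx : x ≤ (pathSt α x n).med
          · by_cases hy : y ≤ (pathSt α y n).med
            · left; rw [pathSt, pathSt, heq, decide_eq_true (heq ▸ hx), decide_eq_true hy]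
            · right
              have : F α x ≤ G α x (n+1) := F_le_G hα0 hα1 x (n+1)
              rw [G, pathSt, decide_eq_true hx] at this
              dsimp [wstep] at this
              rw [pathSt, decide_eq_false hy]
              dsimp [wstep]
              rw [heq] at this
              linarith
          · have hy : ¬ y ≤ (pathSt α y n).med := fun hy => hx (heq ▸ le_trans hxy hy)
            left; rw [pathSt, pathSt, heq, decide_eq_false (fun hh => hx (heq ▸ hh)),
              decide_eq_false hy]
        · right
          calc F α x ≤ (pathSt α y n).f := hle
            _ ≤ (pathSt α y (n+1)).f := f_mono hα0 hα1 y (Nat.le_succ n)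
  apply le_ciInf
  intro n
  rcases key n with heq | hle
  · rw [F]
    calc ⨅ m, G α x m ≤ G α x n := F_le_G hα0 hα1 x n
      _ = G α y n := by rw [G, G, heq]
  · exact le_trans hle (le_add_of_nonneg_right (inv_pathSt hα0 hα1 y n).hp)

/-! ### products of g -/

omit hα0 hα1

def prodg (α : ℝ) (k j : ℕ) : ℝ := ∏ i ∈ Finset.range j, g α (k + i)

theorem prodg_zero (k : ℕ) : prodg α k 0 = 1 := by simp [prodg]

theorem prodg_succ (k j : ℕ) : prodg α k (j + 1) = prodg α k j * g α (k + j) :=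
  Finset.prod_range_succ _ _

include hα0 hα1

theorem prodg_nonneg (k j : ℕ) : 0 ≤ prodg α k j :=
  Finset.prod_nonneg fun i _ => g_nonneg hα0 hα1 _

theorem prodg_le_one (k j : ℕ) : prodg α k j ≤ 1 :=
  Finset.prod_le_one (fun i _ => g_nonneg hα0 hα1 _) (fun i _ => g_le_one hα0 hα1 _)

theorem prodg_antitone (k : ℕ) : Antitone (prodg α k) := by
  apply antitone_nat_of_succ_le
  intro j
  rw [prodg_succ]
  nlinarith [prodg_nonneg hα0 hα1 k j, g_le_one hα0 hα1 (k+j), g_nonneg hα0 hα1 (k+j),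
    prodg_le_one hα0 hα1 k j]

theorem prodg_pair_le (k j : ℕ) : prodg α k (2 * j) ≤ (1/4) ^ j := by
  induction j with
  | zero => simp [prodg_zero]
  | succ j ih =>
      have h1 : prodg α k (2 * (j+1)) = prodg α k (2*j) * (g α (k + 2*j) * g α (k + 2*j + 1)) := by
        rw [show 2 * (j+1) = (2*j + 1) + 1 by ring, prodg_succ, prodg_succ]
        ring_nf
      rw [h1, show k + 2*j + 1 = (k + 2*j) + 1 from rfl, g_mul_g]
      have h2 : α * (1 - α) ≤ 1/4 := by nlinarith [sq_nonneg (2*α - 1)]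
      have h3 : 0 ≤ α * (1 - α) := by nlinarith
      have h4 := prodg_nonneg hα0 hα1 k (2*j)
      have h5 := prodg_le_one hα0 hα1 k (2*j)
      calc prodg α k (2*j) * (α * (1-α)) ≤ prodg α k (2*j) * (1/4) := by nlinarith
        _ ≤ (1/4)^j * (1/4) := by nlinarith [pow_nonneg (by norm_num : (0:ℝ) ≤ 1/4) j]
        _ = (1/4)^(j+1) := by ring

theorem tendsto_prodg (k : ℕ) : Tendsto (fun j => prodg α k j) atTop (𝓝 0) := by
  have hbdd : BddBelow (Set.range (prodg α k)) :=
    ⟨0, by rintro _ ⟨j, rfl⟩; exact prodg_nonneg hα0 hα1 k j⟩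
  have h := tendsto_atTop_ciInf (prodg_antitone hα0 hα1 k) hbdd
  have heq : ⨅ j, prodg α k j = 0 := by
    apply le_antisymm
    · apply ge_of_tendsto' (tendsto_pow_atTop_nhds_zero_of_lt_one (by norm_num) (by norm_num)
        : Tendsto (fun j : ℕ => (1/4 : ℝ)^j) atTop (𝓝 0))
      intro j
      exact le_trans (ciInf_le hbdd (2*j)) (prodg_pair_le hα0 hα1 k j)
    · exact le_ciInf (prodg_nonneg hα0 hα1 k)
  rwa [heq] at h

/-! ### chains -/

omit hα0 hα1

theorem stGo_replicate_true (m n : ℕ) (s : St) :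
    (stGo α n s (List.replicate m true)).a = s.a ∧ (stGo α n s (List.replicate m true)).b = s.b ∧
    (stGo α n s (List.replicate m true)).f = s.f ∧
    (stGo α n s (List.replicate m true)).p = s.p * prodg α n m := by
  induction m with
  | zero => simp [stGo, prodg_zero]
  | succ m ih =>
      rw [List.replicate_succ' ]
      rw [stGo_append]
      obtain ⟨ha, hb, hf, hp⟩ := ih
      simp only [List.length_replicate, stGo, wstep]
      refine ⟨ha, hb, hf, ?_⟩
      rw [hp, prodg_succ]
      ring

theorem stGo_replicate_false (m n : ℕ) (s : St) :
    (stGo α n s (List.replicate m false)).c = s.c ∧ (stGo α n s (List.replicate m false)).d = s.d ∧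
    (stGo α n s (List.replicate m false)).f + (stGo α n s (List.replicate m false)).p
      = s.f + s.p ∧
    (stGo α n s (List.replicate m false)).p = s.p * prodg α (n+1) m := by
  induction m with
  | zero => simp [stGo, prodg_zero]
  | succ m ih =>
      rw [List.replicate_succ']
      rw [stGo_append]
      obtain ⟨hc, hd, hfp, hp⟩ := ih
      simp only [List.length_replicate, stGo]
      dsimp [wstep]
      refine ⟨hc, hd, by linarith, ?_⟩
      rw [hp, one_sub_g, prodg_succ]
      ring_nf

/-! ### strict interior and path following -/

def StrictIn (s : St) (x : ℝ) : Prop := s.l < x ∧ (s.d = 0 ∨ x < s.r)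

theorem wstep_true_r (n : ℕ) (s : St) : (wstep α n true s).r = s.med := rfl
theorem wstep_false_l (n : ℕ) (s : St) : (wstep α n false s).l = s.med := rfl

theorem strictIn_med {s : St} (h : Inv s) : StrictIn s s.med := by
  refine ⟨h.l_lt_med, ?_⟩
  rcases eq_or_ne s.d 0 with hd | hd
  · exact Or.inl hd
  · exact Or.inr (h.med_lt_r hd)

theorem strictIn_wstep_elim {x : ℝ} {s : St} (h : Inv s) (n : ℕ) (lft : Bool)
    (hx : StrictIn (wstep α n lft s) x) :
    StrictIn s x ∧ decide (x ≤ s.med) = lft := by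
  cases lft
  · obtain ⟨h1, h2⟩ := hx
    rw [wstep_false_l] at h1
    have hd : (wstep α n false s).d = s.d := rfl
    have hr : (wstep α n false s).r = s.r := rfl
    rw [hd, hr] at h2
    exact ⟨⟨lt_trans h.l_lt_med h1, h2⟩, decide_eq_false (not_le.2 h1)⟩
  · obtain ⟨h1, h2⟩ := hx
    have hl : (wstep α n true s).l = s.l := rfl
    rw [hl] at h1
    have hd : (wstep α n true s).d = s.b + s.d := rfl
    rw [hd, wstep_true_r] at h2
    have hmed : x < s.med := by
      rcases h2 with h2 | h2
      · exfalso; have := h.hb; omega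
      · exact h2
    refine ⟨⟨h1, ?_⟩, decide_eq_true (le_of_lt hmed)⟩
    rcases eq_or_ne s.d 0 with hd0 | hd0
    · exact Or.inl hd0
    · exact Or.inr (lt_trans hmed (h.med_lt_r hd0))

include hα0 hα1

theorem strictIn_stGo {x : ℝ} (w : List Bool) :
    ∀ (n : ℕ) (s : St), Inv s → StrictIn (stGo α n s w) x → StrictIn s x := by
  induction w with
  | nil => intro n s _ hx; exact hx
  | cons b w ih =>
      intro n s hs hx
      have hx' : StrictIn (wstep α n b s) x :=
        ih (n+1) _ (inv_wstep hα0 hα1 n b hs) hx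
      exact (strictIn_wstep_elim hs n b hx').1

theorem path_follow {x : ℝ} (w : List Bool) :
    ∀ (n : ℕ) (s : St), pathSt α x n = s → Inv s → StrictIn (stGo α n s w) x →
      pathSt α x (n + w.length) = stGo α n s w := by
  induction w with
  | nil => intro n s hps _ _; exact hps
  | cons b w ih =>
      intro n s hps hinv hstrict
      have hstep : StrictIn (wstep α n b s) x :=
        strictIn_stGo hα0 hα1 w (n+1) _ (inv_wstep hα0 hα1 n b hinv) hstrict
      have hdec : decide (x ≤ s.med) = b := (strictIn_wstep_elim hinv n b hstep).2
      have h1 : pathSt α x (n+1) = wstep α n b s := by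
        rw [pathSt, hps, hdec]
      have h2 := ih (n+1) (wstep α n b s) h1 (inv_wstep hα0 hα1 n b hinv) hstrict
      rw [show n + (b :: w).length = (n+1) + w.length by simp; omega]
      exact h2

theorem path_follow_W {x : ℝ} (w : List Bool) (h : StrictIn (stW α w) x) :
    pathSt α x w.length = stW α w := by
  have := path_follow hα0 hα1 w 0 init rfl inv_init (by rw [show stGo α 0 init w = stW α w from rfl]; exact h)
  simpa [stW] using this

theorem F_eq_G_of_const {x : ℝ} (N : ℕ) (hconst : ∀ j, G α x (N + j) = G α x N) :
    F α x = G α x N := by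
  apply le_antisymm (F_le_G hα0 hα1 x N)
  apply le_ciInf
  intro n
  rcases le_or_gt n N with h | h
  · exact G_antitone hα0 hα1 x h
  · have := hconst (n - N)
    rw [show N + (n - N) = n by omega] at this
    rw [this]

theorem G_const_of_r {x : ℝ} (N : ℕ) (hd : (pathSt α x N).d ≠ 0)
    (hr : x = (pathSt α x N).r) : ∀ j, G α x (N + j) = G α x N := by
  have key : ∀ j, (pathSt α x (N + j)).c = (pathSt α x N).c ∧
      (pathSt α x (N + j)).d = (pathSt α x N).d ∧ G α x (N + j) = G α x N := by
    intro j
    induction j with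
    | zero => exact ⟨rfl, rfl, rfl⟩
    | succ j ih =>
        obtain ⟨hc, hdj, hG⟩ := ih
        have hinv := inv_pathSt hα0 hα1 x (N + j)
        have hdj' : (pathSt α x (N + j)).d ≠ 0 := by rw [hdj]; exact hd
        have hrj : x = (pathSt α x (N + j)).r := by
          rw [St.r, hc, hdj]; exact hr
        have hmed : (pathSt α x (N + j)).med < x := by
          have h2 := hinv.med_lt_r hdj'
          rwa [← hrj] at h2
        have hdec : decide (x ≤ (pathSt α x (N + j)).med) = false :=
          decide_eq_false (not_le.2 hmed)
        have hstep : pathSt α x (N + j + 1) = wstep α (N + j) false (pathSt α x (N + j)) := by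
          rw [pathSt, hdec]
        refine ⟨?_, ?_, ?_⟩
        · rw [show N + (j+1) = N + j + 1 from rfl, hstep]; exact hc
        · rw [show N + (j+1) = N + j + 1 from rfl, hstep]; exact hdj
        · rw [← hG]
          unfold G
          rw [show N + (j+1) = N + j + 1 from rfl, hstep]
          dsimp [wstep]
          ring
  exact fun j => (key j).2.2

theorem F_med_aux {x : ℝ} (N : ℕ) (hmed : x = (pathSt α x N).med) :
    F α x = (pathSt α x N).f + g α N * (pathSt α x N).p := by
  have hinv := inv_pathSt hα0 hα1 x N
  have hdec : decide (x ≤ (pathSt α x N).med) = true := decide_eq_true (le_of_eq hmed)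
  have hstep : pathSt α x (N + 1) = wstep α N true (pathSt α x N) := by
    rw [pathSt, hdec]
  have hd : (pathSt α x (N+1)).d ≠ 0 := by
    rw [hstep]
    have := hinv.hb
    dsimp [wstep]
    omega
  have hr : x = (pathSt α x (N+1)).r := by
    rw [hstep, wstep_true_r]; exact hmed
  have h := F_eq_G_of_const hα0 hα1 (N+1) (G_const_of_r hα0 hα1 (N+1) hd hr)
  rw [h]
  unfold G
  rw [hstep]
  rfl

theorem F_med (w : List Bool) :
    F α (stW α w).med = (stW α w).f + g α w.length * (stW α w).p := by
  have hinv := inv_stW hα0 hα1 w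
  have hstrict : StrictIn (stW α w) (stW α w).med := strictIn_med hinv
  have hpath := path_follow_W hα0 hα1 w hstrict
  have := F_med_aux hα0 hα1 (x := (stW α w).med) w.length (by rw [hpath])
  rw [this, hpath]

/-! ### behaviour at -∞ and +∞ -/

theorem pathSt_neg {x : ℝ} (hx : x < 0) (n : ℕ) :
    pathSt α x n = ⟨0, 1, 1, n, 0, prodg α 0 n⟩ := by
  induction n with
  | zero => simp [pathSt, init, prodg_zero]
  | succ n ih =>
      have hmed : (0:ℝ) < (pathSt α x n).med := by
        rw [ih]
        show (0:ℝ) < ((0 + 1 : ℕ):ℝ)/((1 + n : ℕ):ℝ)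
        push_cast
        positivity
      rw [pathSt, decide_eq_true (le_of_lt (lt_trans hx hmed)), ih]
      show St.mk 0 1 (0 + 1) (1 + n) 0 (g α n * prodg α 0 n) = _
      rw [St.mk.injEq]
      refine ⟨rfl, rfl, by omega, by omega, rfl, ?_⟩
      rw [prodg_succ]
      simp [mul_comm]

theorem F_neg {x : ℝ} (hx : x < 0) : F α x = 0 := by
  have hG : ∀ n, G α x n = prodg α 0 n := by
    intro n; rw [G, pathSt_neg hα0 hα1 hx n]; simp
  apply le_antisymm
  · apply ge_of_tendsto' (tendsto_prodg hα0 hα1 0)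
    intro j
    exact le_trans (F_le_G hα0 hα1 x j) (le_of_eq (hG j))
  · exact F_nonneg hα0 hα1 x

theorem F_atBot : Tendsto (F α) atBot (𝓝 0) := by
  apply tendsto_const_nhds.congr'
  filter_upwards [Iio_mem_atBot (0:ℝ)] with y hy
  exact (F_neg hα0 hα1 hy).symm

theorem leftLim_F_zero : leftLim (F α) 0 = 0 := by
  have hne : (𝓝[<] (0:ℝ)).NeBot := inferInstance
  apply leftLim_eq_of_tendsto
  apply tendsto_const_nhds.congr'
  filter_upwards [self_mem_nhdsWithin] with y (hy : y < 0)
  exact (F_neg hα0 hα1 hy).symm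

theorem pathSt_top {x : ℝ} (n : ℕ) (hx : (n:ℝ) < x) :
    pathSt α x n = ⟨n, 1, 1, 0, 1 - prodg α 1 n, prodg α 1 n⟩ := by
  induction n with
  | zero => simp [pathSt, init, prodg_zero]
  | succ n ih =>
      have hn : (n:ℝ) < x := by push_cast at hx ⊢; linarith
      have ihn := ih hn
      have hmed : (pathSt α x n).med < x := by
        rw [ihn]
        show ((n + 1 : ℕ):ℝ)/((1 + 0 : ℕ):ℝ) < x
        push_cast
        simpa using hx
      rw [pathSt, decide_eq_false (not_le.2 hmed), ihn]
      show St.mk (n + 1) (1 + 0) 1 0 ((1 - prodg α 1 n) + g α n * prodg α 1 n)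
        ((1 - g α n) * prodg α 1 n) = _
      rw [St.mk.injEq]
      have hp : (1 - g α n) * prodg α 1 n = prodg α 1 (n + 1) := by
        rw [one_sub_g, prodg_succ, show 1 + n = n + 1 by omega]
        ring
      refine ⟨rfl, by omega, rfl, rfl, by rw [← hp]; ring, hp⟩

theorem F_atTop : Tendsto (F α) atTop (𝓝 1) := by
  rw [show (𝓝 (1:ℝ)) = 𝓝 (1 - 0) by norm_num]
  apply tendsto_order.2
  constructor
  · intro a ha
    norm_num at ha
    have : ∀ᶠ j in atTop, prodg α 1 j < 1 - a :=
      (tendsto_prodg hα0 hα1 1).eventually_lt_const (by linarith)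
    obtain ⟨n, hn⟩ := this.exists
    filter_upwards [eventually_gt_atTop ((n:ℝ))] with x hx
    have := f_le_F hα0 hα1 x n
    rw [pathSt_top hα0 hα1 n hx] at this
    dsimp at this
    linarith
  · intro b hb
    norm_num at hb
    filter_upwards with x
    exact lt_of_le_of_lt (F_le_one hα0 hα1 x) hb

/-! ### right continuity -/

theorem exists_gt_F_le (x : ℝ) {ε : ℝ} (hε : 0 < ε) :
    ∃ y, x < y ∧ F α y ≤ F α x + ε := by
  by_cases hm : ∃ N, x = (pathSt α x N).med
  · obtain ⟨N, hmed⟩ := hm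
    set s := pathSt α x N with hs
    have hinv : Inv s := inv_pathSt hα0 hα1 x N
    have hFx : F α x = s.f + g α N * s.p := F_med_aux hα0 hα1 N hmed
    set R := wstep α N false s with hR
    have hRinv : Inv R := inv_wstep hα0 hα1 N false hinv
    have hxwl : (xword α x N).length = N := xword_length α x N
    have hsW : stW α (xword α x N) = s := (pathSt_eq_stW α x N).symm
    -- the word of the interval V m
    obtain ⟨m, hmsmall⟩ :=
      ((tendsto_prodg hα0 hα1 (N+1)).eventually_lt_const hε).exists
    set W := xword α x N ++ false :: List.replicate m true with hW
    have hWlen : W.length = N + 1 + m := by simp [hW, hxwl]; omega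
    have hVW : stW α W = stGo α (N+1) R (List.replicate m true) := by
      rw [hW, stW, stGo_append, show (0 + (xword α x N).length) = N by rw [hxwl]; omega]
      rw [show stGo α 0 init (xword α x N) = s from hsW]
      rfl
    set V := stW α W with hV
    obtain ⟨hVa, hVb, hVf, hVp⟩ := stGo_replicate_true (α := α) m (N+1) R
    rw [← hVW] at hVa hVb hVf hVp
    have hVinv : Inv V := inv_stW hα0 hα1 W
    refine ⟨V.med, ?_, ?_⟩
    · have : V.l = R.l := by rw [St.l, St.l, hVa, hVb]
      have hxl : V.l = x := by rw [this, hR, wstep_false_l, ← hmed]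
      rw [← hxl]
      exact hVinv.l_lt_med
    · have hFmed := F_med hα0 hα1 W
      rw [← hV] at hFmed
      have hg0 := g_nonneg hα0 hα1 W.length
      have hg1 := g_le_one hα0 hα1 W.length
      have hRp1 : R.p ≤ 1 := by have := hRinv.hfp; have := hRinv.hf; linarith
      have hprodnn := prodg_nonneg hα0 hα1 (N+1) m
      have hRf : R.f = s.f + g α N * s.p := rfl
      have hVpnn : 0 ≤ V.p := hVinv.hp
      calc F α V.med = V.f + g α W.length * V.p := hFmed
        _ ≤ V.f + V.p := by nlinarith
        _ = R.f + R.p * prodg α (N+1) m := by rw [hVf, hVp]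
        _ ≤ R.f + prodg α (N+1) m := by nlinarith [hRinv.hp]
        _ ≤ F α x + ε := by rw [hFx, ← hRf]; linarith
  · push_neg at hm
    have claim : ∀ n, ∃ z, x < z ∧ ∀ y, x < y → y ≤ z → pathSt α y n = pathSt α x n := by
      intro n
      induction n with
      | zero => exact ⟨x + 1, by linarith, fun y _ _ => rfl⟩
      | succ n ih =>
          obtain ⟨z, hz, hagree⟩ := ih
          rcases lt_or_gt_of_ne (hm n) with hlt | hgt
          · refine ⟨min z (pathSt α x n).med, lt_min hz hlt, ?_⟩
            intro y hy1 hy2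
            have hyz : y ≤ z := le_trans hy2 (min_le_left _ _)
            have hpn := hagree y hy1 hyz
            rw [pathSt, pathSt, hpn, decide_eq_true (le_trans hy2 (min_le_right _ _)),
              decide_eq_true (le_of_lt hlt)]
          · refine ⟨z, hz, ?_⟩
            intro y hy1 hy2
            have hpn := hagree y hy1 hy2
            rw [pathSt, pathSt, hpn, decide_eq_false (not_le.2 (lt_trans hgt hy1)),
              decide_eq_false (not_le.2 hgt)]
    have hFlt : ⨅ n, G α x n < F α x + ε := by rw [← F]; linarith
    obtain ⟨n, hn⟩ := exists_lt_of_ciInf_lt hFlt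
    obtain ⟨z, hz, hagree⟩ := claim n
    refine ⟨z, hz, ?_⟩
    have : G α z n = G α x n := by rw [G, G, hagree z hz le_rfl]
    calc F α z ≤ G α z n := F_le_G hα0 hα1 z n
      _ = G α x n := this
      _ ≤ F α x + ε := le_of_lt hn

theorem F_rightCont (x : ℝ) : ContinuousWithinAt (F α) (Ici x) x := by
  have hmono := F_mono hα0 hα1 (α := α)
  unfold ContinuousWithinAt
  apply tendsto_order.2
  constructor
  · intro a ha
    filter_upwards [self_mem_nhdsWithin] with y (hy : y ∈ Ici x)
    exact lt_of_lt_of_le ha (hmono hy)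
  · intro b hb
    obtain ⟨y, hxy, hFy⟩ := exists_gt_F_le hα0 hα1 x (show (0:ℝ) < (b - F α x)/2 by linarith)
    filter_upwards [Ico_mem_nhdsGE hxy] with z hz
    calc F α z ≤ F α y := hmono (le_of_lt hz.2)
      _ ≤ F α x + (b - F α x)/2 := hFy
      _ < b := by linarith

/-! ### left limits at endpoints -/

theorem leftLim_F_med (w : List Bool) :
    leftLim (F α) (stW α w).med = (stW α w).f + g α w.length * (stW α w).p := by
  have hinv := inv_stW hα0 hα1 w
  apply le_antisymm
  · calc leftLim (F α) (stW α w).med ≤ F α ((stW α w).med) :=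
        (F_mono hα0 hα1).leftLim_le le_rfl
      _ = _ := F_med hα0 hα1 w
  · set s := stW α w with hs
    set L := wstep α w.length true s with hL
    have hLinv : Inv L := inv_wstep hα0 hα1 _ true hinv
    have hLd : L.d ≠ 0 := by
      have := hinv.hb; rw [hL]; dsimp [wstep]; omega
    have hVeq : ∀ j, stW α (w ++ true :: List.replicate j false)
        = stGo α (w.length + 1) L (List.replicate j false) := by
      intro j
      rw [stW, stGo_append, show 0 + w.length = w.length by omega]
      rfl
    have key : ∀ j, s.f + g α w.length * s.p - L.p * prodg α (w.length + 2) j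
        ≤ leftLim (F α) s.med := by
      intro j
      set W := w ++ true :: List.replicate j false with hW
      set V := stW α W with hV
      have hVrep := stGo_replicate_false (α := α) j (w.length + 1) L
      rw [← hVeq j, ← hV] at hVrep
      obtain ⟨hVc, hVd, hVfp, hVp⟩ := hVrep
      have hVinv : Inv V := inv_stW hα0 hα1 W
      have hVd0 : V.d ≠ 0 := by rw [hVd]; exact hLd
      have hVr : V.r = s.med := by
        rw [St.r, hVc, hVd, hL]
        rfl
      have hylt : V.med < s.med := by
        rw [← hVr]; exact hVinv.med_lt_r hVd0
      have hFy := F_med hα0 hα1 W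
      rw [← hV] at hFy
      have hle : F α V.med ≤ leftLim (F α) s.med :=
        (F_mono hα0 hα1).le_leftLim hylt
      have hgV := g_nonneg hα0 hα1 W.length
      have hgV1 := g_le_one hα0 hα1 W.length
      have hVpnn : 0 ≤ V.p := hVinv.hp
      have hLf : L.f = s.f := rfl
      have hLp : L.p = g α w.length * s.p := rfl
      have hmul := mul_nonneg hgV hVpnn
      calc s.f + g α w.length * s.p - L.p * prodg α (w.length + 2) j
          = V.f := by rw [← hVp]; rw [hLf, hLp] at hVfp; linarith
        _ ≤ F α V.med := by rw [hFy]; linarith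
        _ ≤ leftLim (F α) s.med := hle
    have htend : Tendsto (fun j => s.f + g α w.length * s.p - L.p * prodg α (w.length + 2) j)
        atTop (𝓝 (s.f + g α w.length * s.p)) := by
      have h2 := (tendsto_prodg hα0 hα1 (w.length + 2)).const_mul L.p
      have h3 := (tendsto_const_nhds (x := s.f + g α w.length * s.p)
        (f := (atTop : Filter ℕ))).sub h2
      simpa using h3
    exact le_of_tendsto' htend key

/-! ### endpoint values of F -/

theorem F_endpoints (w : List Bool) :
    leftLim (F α) (stW α w).l = (stW α w).f ∧
      ((stW α w).d ≠ 0 → F α (stW α w).r = (stW α w).f + (stW α w).p) := by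
  induction w using List.reverseRecOn with
  | nil =>
      constructor
      · have h0 : (stW α []).l = 0 := by norm_num [stW, stGo, init, St.l]
        rw [h0, leftLim_F_zero hα0 hα1]
        rfl
      · intro h; exact absurd rfl h
  | append_singleton w b ih =>
      rw [stW_append_singleton]
      obtain ⟨ih1, ih2⟩ := ih
      have hinv := inv_stW hα0 hα1 w
      cases b
      · constructor
        · rw [wstep_false_l]
          exact leftLim_F_med hα0 hα1 w
        · intro hd
          have hd' : (stW α w).d ≠ 0 := hd
          have hr : (wstep α w.length false (stW α w)).r = (stW α w).r := rfl
          rw [hr, ih2 hd']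
          show _ = (stW α w).f + g α w.length * (stW α w).p
            + (1 - g α w.length) * (stW α w).p
          ring
      · constructor
        · exact ih1
        · intro _
          rw [wstep_true_r]
          rw [F_med hα0 hα1 w]
          rfl

/-! ### the Stieltjes measure -/

omit hα0 hα1

theorem sbSet_proj (s : St) :
    sbSet (proj s) = if s.d = 0 then Set.Ici s.l else Set.Icc s.l s.r := rfl

def Fst (hα0 : 0 ≤ α) (hα1 : α ≤ 1) : StieltjesFunction ℝ where
  toFun := F α
  mono' := F_mono hα0 hα1
  right_continuous' := F_rightCont hα0 hα1

include hα0 hα1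

theorem Fst_sbSet (w : List Bool) :
    (Fst hα0 hα1).measure (sbSet (sb w)) = ENNReal.ofReal ((stW α w).p) := by
  rw [sb_eq_proj α w, sbSet_proj]
  obtain ⟨h1, h2⟩ := F_endpoints hα0 hα1 w
  have hinv := inv_stW hα0 hα1 w
  by_cases hd : (stW α w).d = 0
  · rw [if_pos hd, StieltjesFunction.measure_Ici _ (F_atTop hα0 hα1)]
    rw [show leftLim (⇑(Fst hα0 hα1)) (stW α w).l = (stW α w).f from h1]
    congr 1
    have := hinv.hspine hd
    linarith
  · rw [if_neg hd, StieltjesFunction.measure_Icc]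
    rw [show leftLim (⇑(Fst hα0 hα1)) (stW α w).l = (stW α w).f from h1,
      show (Fst hα0 hα1) (stW α w).r = (stW α w).f + (stW α w).p from h2 hd]
    congr 1
    ring

theorem Fst_prob : IsProbabilityMeasure (Fst hα0 hα1).measure :=
  StieltjesFunction.isProbabilityMeasure _ (F_atBot hα0 hα1) (F_atTop hα0 hα1)

theorem Fst_Iio : (Fst hα0 hα1).measure (Set.Iio 0) = 0 := by
  haveI := Fst_prob hα0 hα1
  have h1 : (Fst hα0 hα1).measure (Set.Ici 0) = 1 := by
    rw [StieltjesFunction.measure_Ici _ (F_atTop hα0 hα1)]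
    rw [show leftLim (⇑(Fst hα0 hα1)) 0 = 0 from leftLim_F_zero hα0 hα1]
    norm_num
  rw [show Set.Iio (0:ℝ) = (Set.Ici 0)ᶜ from (compl_Ici (a := (0:ℝ))).symm,
    measure_compl measurableSet_Ici (measure_ne_top _ _), measure_univ, h1, tsub_self]

theorem isSB_Fst : IsSternBrocotMeasure α (Fst hα0 hα1).measure := by
  refine ⟨Fst_prob hα0 hα1, Fst_Iio hα0 hα1, ?_, ?_, ?_⟩
  · have h := Fst_sbSet hα0 hα1 [true]
    have hset : sbSet (sb [true]) = Set.Icc 0 1 := by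
      show sbSet ((0,1),(1,1)) = _
      norm_num [sbSet]
    have hp : (stW α [true]).p = 1 - α := by
      show g α 0 * (1:ℝ) = 1 - α
      norm_num [g]
    rw [hset, hp] at h
    exact h
  · have h := Fst_sbSet hα0 hα1 [false]
    have hset : sbSet (sb [false]) = Set.Ici 1 := by
      show sbSet ((1,1),(1,0)) = _
      norm_num [sbSet]
    have hp : (stW α [false]).p = α := by
      show (1 - g α 0) * (1:ℝ) = α
      norm_num [g]
    rw [hset, hp] at h
    exact h
  · intro w _
    rw [Fst_sbSet hα0 hα1, Fst_sbSet hα0 hα1, stW_append_singleton]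
    have hwp : (wstep α w.length true (stW α w)).p = g α w.length * (stW α w).p := rfl
    rw [hwp, ENNReal.ofReal_mul (g_nonneg hα0 hα1 _)]
    congr 1
    unfold g
    split <;> rfl

/-! ### uniqueness -/

omit hα0 hα1

theorem stW_append (w u : List Bool) : stW α (w ++ u) = stGo α w.length (stW α w) u := by
  rw [stW, stGo_append]; norm_num; rfl

variable {ν : Measure ℝ}

theorem nu_Ici0 (hν : IsSternBrocotMeasure α ν) : ν (Set.Ici 0) = 1 := by
  haveI := hν.1
  rw [show Set.Ici (0:ℝ) = (Set.Iio 0)ᶜ from (compl_Iio (a := (0:ℝ))).symm,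
    measure_compl measurableSet_Iio (measure_ne_top _ _), measure_univ, hν.2.1, tsub_zero]

theorem nu_true_step (hν : IsSternBrocotMeasure α ν) (w : List Bool) :
    ν (sbSet (sb (w ++ [true]))) = ENNReal.ofReal (g α w.length) * ν (sbSet (sb w)) := by
  match w with
  | [] =>
      rw [show sbSet (sb ([] ++ [true])) = Set.Icc 0 1 by
        show sbSet ((0,1),(1,1)) = _; norm_num [sbSet]]
      rw [hν.2.2.1]
      rw [show sbSet (sb []) = Set.Ici (0:ℝ) by
        show sbSet ((0,1),(1,0)) = _; norm_num [sbSet]]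
      rw [nu_Ici0 hν, mul_one]
      norm_num [g]
  | (b :: w') =>
      rw [hν.2.2.2.2 (b :: w') (by simp)]
      congr 1
      unfold g
      split <;> rfl

include hα0 hα1

theorem nu_chain_le (hν : IsSternBrocotMeasure α ν) (w : List Bool) (m : ℕ) :
    ν (sbSet (sb (w ++ List.replicate m true))) ≤ ENNReal.ofReal (prodg α w.length m) := by
  haveI := hν.1
  induction m with
  | zero => simpa [prodg_zero] using prob_le_one
  | succ m ih =>
      rw [show w ++ List.replicate (m+1) true = (w ++ List.replicate m true) ++ [true] by
        rw [List.replicate_succ', ← List.append_assoc]]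
      rw [nu_true_step hν]
      calc ENNReal.ofReal (g α (w ++ List.replicate m true).length)
            * ν (sbSet (sb (w ++ List.replicate m true)))
          ≤ ENNReal.ofReal (g α (w.length + m)) * ENNReal.ofReal (prodg α w.length m) := by
            rw [show (w ++ List.replicate m true).length = w.length + m by simp]
            exact mul_le_mul_right ih _
        _ = ENNReal.ofReal (prodg α w.length (m+1)) := by
            rw [← ENNReal.ofReal_mul (g_nonneg hα0 hα1 _), prodg_succ, mul_comm]

theorem nu_atom (hν : IsSternBrocotMeasure α ν) (w : List Bool) :
    ν {(stW α w).l} = 0 := by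
  have hsub : ∀ m, ν {(stW α w).l} ≤ ENNReal.ofReal (prodg α w.length m) := by
    intro m
    refine le_trans (measure_mono ?_) (nu_chain_le hα0 hα1 hν w m)
    rw [sb_eq_proj α _, sbSet_proj]
    obtain ⟨ha, hb, _, _⟩ := stGo_replicate_true (α := α) m w.length (stW α w)
    rw [← stW_append] at ha hb
    have hl : (stW α (w ++ List.replicate m true)).l = (stW α w).l := by
      simp only [St.l, ha, hb]
    have hinv := inv_stW hα0 hα1 (w ++ List.replicate m true)
    rw [Set.singleton_subset_iff]
    split
    · rw [mem_Ici, hl]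
    · rw [Set.mem_Icc, hl]
      refine ⟨le_refl _, ?_⟩
      have h2 := le_of_lt (hinv.l_lt_r (by assumption))
      rwa [hl] at h2
  have htend : Tendsto (fun m => ENNReal.ofReal (prodg α w.length m)) atTop (𝓝 0) := by
    rw [show (0 : ℝ≥0∞) = ENNReal.ofReal 0 by simp]
    exact ENNReal.tendsto_ofReal (tendsto_prodg hα0 hα1 w.length)
  exact le_antisymm (ge_of_tendsto' htend hsub) zero_le

theorem nu_med_atom (hν : IsSternBrocotMeasure α ν) (w : List Bool) :
    ν {(stW α w).med} = 0 := by
  have h : (stW α (w ++ [false])).l = (stW α w).med := by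
    rw [stW_append_singleton]; rfl
  rw [← h]
  exact nu_atom hα0 hα1 hν (w ++ [false])

theorem nu_val (hν : IsSternBrocotMeasure α ν) (w : List Bool) :
    ν (sbSet (sb w)) = ENNReal.ofReal ((stW α w).p) := by
  induction w using List.reverseRecOn with
  | nil =>
      rw [show sbSet (sb []) = Set.Ici (0:ℝ) by
        show sbSet ((0,1),(1,0)) = _; norm_num [sbSet]]
      rw [nu_Ici0 hν]
      show (1 : ℝ≥0∞) = ENNReal.ofReal 1
      simp
  | append_singleton w b ih =>
      cases b
      · -- right child
        have hinv := inv_stW hα0 hα1 w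
        set s := stW α w with hs
        have hlm := le_of_lt hinv.l_lt_med
        have hA : sbSet (sb (w ++ [true])) = Set.Icc s.l s.med := by
          rw [sb_eq_proj α _, sbSet_proj, stW_append_singleton]
          rw [if_neg (show (wstep α w.length true s).d ≠ 0 by
            have := hinv.hb; dsimp [wstep]; omega)]
          rfl
        have hB : sbSet (sb (w ++ [false])) =
            (if s.d = 0 then Set.Ici s.med else Set.Icc s.med s.r) := by
          rw [sb_eq_proj α _, sbSet_proj, stW_append_singleton]
          rfl
        have hC : sbSet (sb w) = (if s.d = 0 then Set.Ici s.l else Set.Icc s.l s.r) := by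
          rw [sb_eq_proj α _, sbSet_proj]
        have hBmeas : MeasurableSet (sbSet (sb (w ++ [false]))) := by
          rw [hB]; split
          · exact measurableSet_Ici
          · exact measurableSet_Icc
        have hunion : sbSet (sb (w ++ [true])) ∪ sbSet (sb (w ++ [false])) = sbSet (sb w) := by
          rw [hA, hB, hC]
          by_cases hd : s.d = 0
          · rw [if_pos hd, if_pos hd, Set.Icc_union_Ici_eq_Ici hlm]
          · rw [if_neg hd, if_neg hd,
              Set.Icc_union_Icc_eq_Icc hlm (le_of_lt (hinv.med_lt_r hd))]
        have hinter : sbSet (sb (w ++ [true])) ∩ sbSet (sb (w ++ [false])) = {s.med} := by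
          rw [hA, hB]
          by_cases hd : s.d = 0
          · rw [if_pos hd]
            apply Set.Subset.antisymm
            · rintro y ⟨⟨_, hy1⟩, hy2⟩
              exact le_antisymm hy1 hy2
            · rintro y (rfl : y = s.med)
              exact ⟨⟨hlm, le_refl _⟩, Set.self_mem_Ici⟩
          · rw [if_neg hd,
              Set.Icc_inter_Icc_eq_singleton hlm (le_of_lt (hinv.med_lt_r hd))]
        have hkey := measure_union_add_inter (μ := ν) (sbSet (sb (w ++ [true]))) hBmeas
        rw [hunion, hinter, nu_med_atom hα0 hα1 hν w, add_zero, ih,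
          nu_true_step hν w, ih, ← ENNReal.ofReal_mul (g_nonneg hα0 hα1 _)] at hkey
        have hsub : ν (sbSet (sb (w ++ [false])))
            = ENNReal.ofReal s.p - ENNReal.ofReal (g α w.length * s.p) := by
          rw [hkey]
          exact (ENNReal.add_sub_cancel_left ENNReal.ofReal_ne_top).symm
        rw [hsub, ← ENNReal.ofReal_sub _ (mul_nonneg (g_nonneg hα0 hα1 _) hinv.hp),
          stW_append_singleton]
        show _ = ENNReal.ofReal ((1 - g α w.length) * s.p)
        congr 1
        ring
      · -- left child
        rw [nu_true_step hν w, ih, ← ENNReal.ofReal_mul (g_nonneg hα0 hα1 _),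
          stW_append_singleton]
        rfl

/-! ### the CDF of any Stern-Brocot measure -/

omit hα0 hα1

theorem path_mem {x : ℝ} (hx : 0 ≤ x) (n : ℕ) :
    (pathSt α x n).l ≤ x ∧ ((pathSt α x n).d = 0 ∨ x ≤ (pathSt α x n).r) := by
  induction n with
  | zero =>
      constructor
      · show ((0:ℕ):ℝ)/((1:ℕ):ℝ) ≤ x
        norm_num [hx]
      · exact Or.inl rfl
  | succ n ih =>
      obtain ⟨ih1, ih2⟩ := ih
      rcases Bool.eq_false_or_eq_true (decide (x ≤ (pathSt α x n).med)) with hdec | hdec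
      · have hmed : x ≤ (pathSt α x n).med := of_decide_eq_true hdec
        rw [pathSt, hdec]
        exact ⟨ih1, Or.inr hmed⟩
      · have hmed : ¬ (x ≤ (pathSt α x n).med) := of_decide_eq_false hdec
        rw [pathSt, hdec]
        exact ⟨le_of_lt (not_le.1 hmed), ih2⟩

include hα0 hα1

theorem d_stable {x : ℝ} (n : ℕ) (hd : (pathSt α x n).d ≠ 0) :
    (pathSt α x (n+1)).d ≠ 0 := by
  have hb := (inv_pathSt hα0 hα1 x n).hb
  rcases Bool.eq_false_or_eq_true (decide (x ≤ (pathSt α x n).med)) with hdec | hdec <;>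
    rw [pathSt, hdec] <;> dsimp [wstep] <;> omega

theorem r_dec {x : ℝ} (n : ℕ) (hd : (pathSt α x n).d ≠ 0) :
    (pathSt α x (n+1)).r ≤ (pathSt α x n).r := by
  have hinv := inv_pathSt hα0 hα1 x n
  rcases Bool.eq_false_or_eq_true (decide (x ≤ (pathSt α x n).med)) with hdec | hdec <;>
    rw [pathSt, hdec]
  · exact le_of_lt (hinv.med_lt_r hd)
  · exact le_refl _

def Kn (α x : ℝ) (n : ℕ) : Set ℝ :=
  if (pathSt α x n).d = 0 then Set.Ici (0:ℝ) else Set.Icc 0 (pathSt α x n).r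

theorem Kn_meas (x : ℝ) (n : ℕ) : MeasurableSet (Kn α x n) := by
  unfold Kn; split
  · exact measurableSet_Ici
  · exact measurableSet_Icc

omit hα0 hα1 in
theorem Kn_sub_Ici (x : ℝ) (n : ℕ) : Kn α x n ⊆ Set.Ici (0:ℝ) := by
  unfold Kn; split
  · exact fun y hy => hy
  · exact Set.Icc_subset_Ici_self

theorem Kn_antitone (x : ℝ) : Antitone (Kn α x) := by
  apply antitone_nat_of_succ_le
  intro n
  by_cases hd : (pathSt α x n).d = 0
  · rw [show Kn α x n = Set.Ici 0 from if_pos hd]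
    exact Kn_sub_Ici x (n+1)
  · rw [show Kn α x n = Set.Icc 0 (pathSt α x n).r from if_neg hd,
      show Kn α x (n+1) = Set.Icc 0 (pathSt α x (n+1)).r from
        if_neg (d_stable hα0 hα1 n hd)]
    exact Set.Icc_subset_Icc_right (r_dec hα0 hα1 n hd)

theorem all_d_zero {x : ℝ} (hall : ∀ n, (pathSt α x n).d = 0) (n : ℕ) :
    (pathSt α x n).a = n ∧ (pathSt α x n).b = 1 ∧ (pathSt α x n).c = 1 := by
  induction n with
  | zero => exact ⟨rfl, rfl, rfl⟩
  | succ n ih =>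
      obtain ⟨ha, hb, hc⟩ := ih
      have hd := hall n
      have hd1 := hall (n+1)
      rcases Bool.eq_false_or_eq_true (decide (x ≤ (pathSt α x n).med)) with hdec | hdec
      · exfalso
        rw [pathSt, hdec] at hd1
        dsimp [wstep] at hd1
        omega
      · rw [pathSt, hdec]
        dsimp [wstep]
        omega

theorem exists_d_ne_zero {x : ℝ} (hx : 0 ≤ x) : ∃ N, (pathSt α x N).d ≠ 0 := by
  by_contra hall
  push_neg at hall
  obtain ⟨n, hn⟩ := exists_nat_gt x
  obtain ⟨ha, hb, _⟩ := all_d_zero hα0 hα1 hall n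
  have hl := (path_mem (α := α) hx n).1
  rw [St.l, ha, hb] at hl
  norm_num at hl
  linarith

theorem bd_growth {x : ℝ} (N : ℕ) (hd : (pathSt α x N).d ≠ 0) (k : ℕ) :
    (pathSt α x (N+k)).d ≠ 0 ∧ k + 2 ≤ (pathSt α x (N+k)).b + (pathSt α x (N+k)).d := by
  induction k with
  | zero =>
      have hb := (inv_pathSt hα0 hα1 x N).hb
      simp only [Nat.add_zero]
      constructor
      · exact hd
      · omega
  | succ k ih =>
      obtain ⟨ihd, ihs⟩ := ih
      have hb := (inv_pathSt hα0 hα1 x (N+k)).hb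
      refine ⟨d_stable hα0 hα1 (N+k) ihd, ?_⟩
      rw [show N + (k+1) = (N + k) + 1 from rfl]
      rcases Bool.eq_false_or_eq_true (decide (x ≤ (pathSt α x (N+k)).med)) with hdec | hdec <;>
        rw [pathSt, hdec] <;> dsimp [wstep] <;> omega

omit hα0 hα1 in
theorem width_eq {s : St} (hinv : Inv s) (hd : s.d ≠ 0) :
    s.r - s.l = 1 / ((s.b * s.d : ℕ) : ℝ) := by
  have hb0 : (s.b:ℝ) ≠ 0 := ne_of_gt hinv.bpos
  have hd0 : (s.d:ℝ) ≠ 0 := Nat.cast_ne_zero.2 hd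
  have hdet := hinv.detR
  rw [St.r, St.l, div_sub_div _ _ hd0 hb0,
    show (s.c:ℝ) * s.b - (s.d:ℝ) * s.a = 1 by linear_combination hdet]
  push_cast
  rw [mul_comm]

theorem nu_cumf (hν : IsSternBrocotMeasure α ν) {x : ℝ} (hx : 0 ≤ x) :
    ∀ n, ν (Set.Icc 0 (pathSt α x n).l) = ENNReal.ofReal ((pathSt α x n).f) := by
  have h0 : (stW α []).l = (0:ℝ) := by
    show ((0:ℕ):ℝ)/((1:ℕ):ℝ) = 0
    norm_num
  intro n
  induction n with
  | zero =>
      rw [show (pathSt α x 0).l = (0:ℝ) from h0, Set.Icc_self]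
      have hatom := nu_atom hα0 hα1 hν []
      rw [h0] at hatom
      rw [hatom]
      show (0:ℝ≥0∞) = ENNReal.ofReal 0
      simp
  | succ n ih =>
      set s := pathSt α x n with hsdef
      have hinv : Inv s := inv_pathSt hα0 hα1 x n
      have hsW : stW α (xword α x n) = s := (pathSt_eq_stW α x n).symm
      rcases Bool.eq_false_or_eq_true (decide (x ≤ s.med)) with hdec | hdec
      · rw [pathSt, ← hsdef, hdec]
        exact ih
      · rw [pathSt, ← hsdef, hdec]
        have hl : (wstep α n false s).l = s.med := wstep_false_l n s
        have hf : (wstep α n false s).f = s.f + g α n * s.p := rfl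
        rw [hl, hf]
        have hsplit : Set.Icc (0:ℝ) s.med = Set.Icc 0 s.l ∪ Set.Icc s.l s.med :=
          (Set.Icc_union_Icc_eq_Icc hinv.l_nonneg (le_of_lt hinv.l_lt_med)).symm
        have hint : Set.Icc (0:ℝ) s.l ∩ Set.Icc s.l s.med = {s.l} :=
          Set.Icc_inter_Icc_eq_singleton hinv.l_nonneg (le_of_lt hinv.l_lt_med)
        have hA : sbSet (sb (xword α x n ++ [true])) = Set.Icc s.l s.med := by
          rw [sb_eq_proj α _, sbSet_proj, stW_append_singleton, xword_length, hsW]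
          rw [if_neg (show (wstep α n true s).d ≠ 0 by
            have := hinv.hb; dsimp [wstep]; omega)]
          rfl
        have hval : ν (Set.Icc s.l s.med) = ENNReal.ofReal (g α n * s.p) := by
          rw [← hA, nu_val hα0 hα1 hν, stW_append_singleton, xword_length, hsW]
          rfl
        have hatom : ν {s.l} = 0 := by
          have := nu_atom hα0 hα1 hν (xword α x n)
          rwa [hsW] at this
        have hkey := measure_union_add_inter (μ := ν) (Set.Icc 0 s.l)
          (measurableSet_Icc (a := s.l) (b := s.med))
        rw [← hsplit, hint, hatom, add_zero, ih, hval,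
          ← ENNReal.ofReal_add hinv.hf (mul_nonneg (g_nonneg hα0 hα1 n) hinv.hp)] at hkey
        exact hkey

theorem nu_Kn (hν : IsSternBrocotMeasure α ν) {x : ℝ} (hx : 0 ≤ x) (n : ℕ) :
    ν (Kn α x n) = ENNReal.ofReal (G α x n) := by
  set s := pathSt α x n with hsdef
  have hinv : Inv s := inv_pathSt hα0 hα1 x n
  have hsW : stW α (xword α x n) = s := (pathSt_eq_stW α x n).symm
  have hatom : ν {s.l} = 0 := by
    have := nu_atom hα0 hα1 hν (xword α x n)
    rwa [hsW] at this
  have hcum := nu_cumf hα0 hα1 hν hx n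
  by_cases hd : s.d = 0
  · rw [show Kn α x n = Set.Ici 0 from if_pos hd]
    have hunion : Set.Icc (0:ℝ) s.l ∪ Set.Ici s.l = Set.Ici 0 :=
      Set.Icc_union_Ici_eq_Ici hinv.l_nonneg
    have hint : Set.Icc (0:ℝ) s.l ∩ Set.Ici s.l = {s.l} := by
      apply Set.Subset.antisymm
      · rintro y ⟨⟨_, h1⟩, h2⟩
        exact le_antisymm h1 h2
      · rintro y (rfl : y = s.l)
        exact ⟨⟨hinv.l_nonneg, le_refl _⟩, Set.self_mem_Ici⟩
    have hIci : ν (Set.Ici s.l) = ENNReal.ofReal s.p := by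
      have := nu_val hα0 hα1 hν (xword α x n)
      rwa [sb_eq_proj α _, sbSet_proj, hsW, if_pos hd] at this
    have hkey := measure_union_add_inter (μ := ν) (Set.Icc 0 s.l)
      (measurableSet_Ici (a := s.l))
    rw [hunion, hint, hatom, add_zero, hcum, hIci,
      ← ENNReal.ofReal_add hinv.hf hinv.hp] at hkey
    exact hkey
  · rw [show Kn α x n = Set.Icc 0 s.r from if_neg hd]
    have hunion : Set.Icc (0:ℝ) s.l ∪ Set.Icc s.l s.r = Set.Icc 0 s.r :=
      Set.Icc_union_Icc_eq_Icc hinv.l_nonneg (le_of_lt (hinv.l_lt_r hd))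
    have hint : Set.Icc (0:ℝ) s.l ∩ Set.Icc s.l s.r = {s.l} :=
      Set.Icc_inter_Icc_eq_singleton hinv.l_nonneg (le_of_lt (hinv.l_lt_r hd))
    have hIcc : ν (Set.Icc s.l s.r) = ENNReal.ofReal s.p := by
      have := nu_val hα0 hα1 hν (xword α x n)
      rwa [sb_eq_proj α _, sbSet_proj, hsW, if_neg hd] at this
    have hkey := measure_union_add_inter (μ := ν) (Set.Icc 0 s.l)
      (measurableSet_Icc (a := s.l) (b := s.r))
    rw [hunion, hint, hatom, add_zero, hcum, hIcc,
      ← ENNReal.ofReal_add hinv.hf hinv.hp] at hkey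
    exact hkey

theorem Kn_iInter {x : ℝ} (hx : 0 ≤ x) : ⋂ n, Kn α x n = Set.Icc 0 x := by
  apply Set.Subset.antisymm
  · intro y hy
    have hy0 : (0:ℝ) ≤ y := Kn_sub_Ici x 0 (Set.mem_iInter.1 hy 0)
    refine ⟨hy0, ?_⟩
    by_contra hxy
    push_neg at hxy
    obtain ⟨N, hN⟩ := exists_d_ne_zero hα0 hα1 hx
    have hyle : ∀ k : ℕ, y ≤ x + 1/((k:ℝ)+1) := by
      intro k
      obtain ⟨hdk, hsum⟩ := bd_growth hα0 hα1 N hN k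
      have hinv := inv_pathSt hα0 hα1 x (N+k)
      have hbd : (k + 1 : ℕ) ≤ (pathSt α x (N+k)).b * (pathSt α x (N+k)).d := by
        have hb1 := hinv.hb
        have hd1 : 1 ≤ (pathSt α x (N+k)).d := Nat.one_le_iff_ne_zero.2 hdk
        obtain ⟨b', hb'⟩ : ∃ b', (pathSt α x (N+k)).b = b' + 1 :=
          ⟨(pathSt α x (N+k)).b - 1, by omega⟩
        obtain ⟨d', hd'⟩ : ∃ d', (pathSt α x (N+k)).d = d' + 1 :=
          ⟨(pathSt α x (N+k)).d - 1, by omega⟩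
        have hexp : (b' + 1) * (d' + 1) = b'*d' + b' + d' + 1 := by ring
        rw [hb', hd'] at hsum ⊢
        omega
      have hym : y ∈ Kn α x (N+k) := Set.mem_iInter.1 hy (N+k)
      rw [show Kn α x (N+k) = Set.Icc 0 (pathSt α x (N+k)).r from if_neg hdk] at hym
      have hyr : y ≤ (pathSt α x (N+k)).r := hym.2
      have hw := width_eq (hinv) hdk
      have hlx := (path_mem (α := α) hx (N+k)).1
      have hbd' : ((k:ℝ) + 1) ≤ (((pathSt α x (N+k)).b * (pathSt α x (N+k)).d : ℕ):ℝ) := by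
        exact_mod_cast hbd
      have hpos : (0:ℝ) < ((k:ℝ)+1) := by positivity
      have hfrac : 1/(((pathSt α x (N+k)).b * (pathSt α x (N+k)).d : ℕ):ℝ) ≤ 1/((k:ℝ)+1) :=
        one_div_le_one_div_of_le hpos hbd'
      linarith
    have htend : Tendsto (fun k : ℕ => x + 1/((k:ℝ)+1)) atTop (𝓝 x) := by
      have h2 := tendsto_one_div_add_atTop_nhds_zero_nat (𝕜 := ℝ)
      have h3 := (tendsto_const_nhds (x := x) (f := (atTop : Filter ℕ))).add h2
      simpa using h3
    have := ge_of_tendsto' htend hyle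
    linarith
  · intro y hy
    apply Set.mem_iInter.2
    intro n
    unfold Kn
    split
    · exact hy.1
    · refine ⟨hy.1, le_trans hy.2 ?_⟩
      have := (path_mem (α := α) hx n).2
      rcases this with hd | hle
      · exact absurd hd (by assumption)
      · exact hle

theorem nu_Icc0 (hν : IsSternBrocotMeasure α ν) {x : ℝ} (hx : 0 ≤ x) :
    ν (Set.Icc 0 x) = ENNReal.ofReal (F α x) := by
  haveI := hν.1
  have h1 := tendsto_measure_iInter_atTop (μ := ν)
    (fun n => (Kn_meas hα0 hα1 x n).nullMeasurableSet) (Kn_antitone hα0 hα1 x)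
    ⟨0, measure_ne_top ν _⟩
  rw [Kn_iInter hα0 hα1 hx] at h1
  have h2 : (ν ∘ Kn α x) = fun n => ENNReal.ofReal (G α x n) :=
    funext (fun n => nu_Kn hα0 hα1 hν hx n)
  rw [h2] at h1
  have h3 : Tendsto (fun n => ENNReal.ofReal (G α x n)) atTop (𝓝 (ENNReal.ofReal (F α x))) :=
    ENNReal.tendsto_ofReal (tendsto_atTop_ciInf (G_antitone hα0 hα1 x) (bddBelow_G hα0 hα1 x))
  exact tendsto_nhds_unique h1 h3

theorem nu_Iic (hν : IsSternBrocotMeasure α ν) (x : ℝ) :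
    ν (Set.Iic x) = if 0 ≤ x then ENNReal.ofReal (F α x) else 0 := by
  by_cases hx : 0 ≤ x
  · rw [if_pos hx, ← nu_Icc0 hα0 hα1 hν hx]
    apply le_antisymm
    · have hsub : Set.Iic x ⊆ Set.Iio 0 ∪ Set.Icc 0 x := by
        intro y hy
        rcases lt_or_ge y 0 with h | h
        · exact Or.inl h
        · exact Or.inr ⟨h, hy⟩
      calc ν (Set.Iic x) ≤ ν (Set.Iio 0 ∪ Set.Icc 0 x) := measure_mono hsub
        _ ≤ ν (Set.Iio 0) + ν (Set.Icc 0 x) := measure_union_le _ _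
        _ = ν (Set.Icc 0 x) := by rw [hν.2.1, zero_add]
    · exact measure_mono Set.Icc_subset_Iic_self
  · rw [if_neg hx]
    apply le_antisymm _ zero_le
    calc ν (Set.Iic x) ≤ ν (Set.Iio 0) := measure_mono (fun y hy => lt_of_le_of_lt hy (not_le.1 hx))
      _ = 0 := hν.2.1

end SBAux

/-- For every `α ∈ [0,1]` there is a unique Borel probability measure `ν` on `[0,∞)` with
`ν([0,1]) = 1-α`, `ν([1,∞)) = α`, and splitting the mass of every Stern-Brocot interval of rank
`r ≥ 1` between its two sub-intervals in proportions `α` (left) when `r` is odd and `1-α` (left)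
when `r` is even. -/
theorem existsUnique_sternBrocotMeasure (α : ℝ) (hα0 : 0 ≤ α) (hα1 : α ≤ 1) :
    ∃! ν : Measure ℝ, IsSternBrocotMeasure α ν := by
  refine ⟨(SBAux.Fst hα0 hα1).measure, SBAux.isSB_Fst hα0 hα1, ?_⟩
  intro ν' hν'
  haveI := hν'.1
  haveI := (SBAux.isSB_Fst hα0 hα1).1
  apply MeasureTheory.Measure.ext_of_Iic
  intro a
  rw [SBAux.nu_Iic hα0 hα1 hν' a, SBAux.nu_Iic hα0 hα1 (SBAux.isSB_Fst hα0 hα1) a]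
end
end

section
/- Let 0 < p ≤ 1/3. Then, almost surely, (1/n)·log(max(F̃_n, 1)) converges to 0 as n → ∞; that is, the upper Lyapunov exponent of the non-linear random Fibonacci sequence is zero for all p ≤ 1/3. -/
open MeasureTheory Filter Set Topology

noncomputable section

/-- The non-linear random Fibonacci sequence: `F̃ 1 = F̃ 2 = 1` and
`F̃ (n+2) = |F̃ (n+1) + ε (n+2) * F̃ n|` for `n ≥ 1`, driven by the signs `ε`. -/
def ntFibSeq {Ω : Type*} (ε : ℕ → Ω → ℝ) : ℕ → Ω → ℝ
  | 0 => fun _ => 1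
  | 1 => fun _ => 1
  | 2 => fun _ => 1
  | n + 3 => fun ω => |ntFibSeq ε (n + 2) ω + ε (n + 3) ω * ntFibSeq ε (n + 1) ω|

namespace NRFaux

/-- One move on a pair: `true` is the "plus" move, `false` the "minus" move. -/
def mv : Bool → ℝ × ℝ → ℝ × ℝ
  | true, s => (s.2, s.1 + s.2)
  | false, s => (s.2, |s.2 - s.1|)

/-- Apply a word of moves (head = most recent move, applied last). -/
def applyW (w : List Bool) (s : ℝ × ℝ) : ℝ × ℝ := w.foldr mv s

@[simp] lemma applyW_nil (s : ℝ × ℝ) : applyW [] s = s := rfl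

@[simp] lemma applyW_cons (b : Bool) (w : List Bool) (s : ℝ × ℝ) :
    applyW (b :: w) s = mv b (applyW w s) := rfl

/-- Reduced words: concatenations of `P` and `MP` blocks. -/
inductive Good : List Bool → Prop
  | nil : Good []
  | ptop {w : List Bool} : Good w → Good (true :: w)
  | mptop {w : List Bool} : Good w → Good (false :: true :: w)

/-- Push a move onto the stack, performing the `MMP = id` cancellation, and
cycling the root when the stack is empty and a minus move arrives. -/
def pushS : Bool → List Bool × (ℝ × ℝ) → List Bool × (ℝ × ℝ)
  | true, (w, r) => (true :: w, r)
  | false, ([], r) => ([], mv false r)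
  | false, (false :: true :: t, r) => (t, r)
  | false, (w, r) => (false :: w, r)

def proc (c : ℕ → Bool) : ℕ → List Bool × (ℝ × ℝ)
  | 0 => ([], (1, 1))
  | n + 1 => pushS (c n) (proc c n)

/-- Weight of the stack. -/
def wt : List Bool → ℝ
  | [] => 0
  | true :: w => wt w + 2
  | false :: w => wt w - 1

/-- Number of plus moves in the stack. -/
def tc : List Bool → ℕ
  | [] => 0
  | true :: w => tc w + 1
  | false :: w => tc w

def gs (c : ℕ → Bool) (k : ℕ) : ℝ := if c k then 2 else -1

def Sw (c : ℕ → Bool) (n : ℕ) : ℝ := ∑ k ∈ Finset.range n, gs c k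

/-- Lindley reflected walk dominating the stack weight. -/
def phi (c : ℕ → Bool) : ℕ → ℝ
  | 0 => 0
  | n + 1 => max (phi c n + gs c n) 0

def mS (c : ℕ → Bool) (n : ℕ) : ℝ :=
  (Finset.range (n + 1)).inf' (by simp) (Sw c)

lemma tc_le_wt {w : List Bool} (h : Good w) : (tc w : ℝ) ≤ wt w := by
  induction h with
  | nil => simp [wt, tc]
  | ptop _ ih => simp only [wt, tc]; push_cast; linarith
  | mptop _ ih => simp only [wt, tc]; push_cast; linarith

lemma mmp (x : ℝ × ℝ) (h1 : 0 ≤ x.1) (h2 : 0 ≤ x.2) :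
    mv false (mv false (mv true x)) = x := by
  simp only [mv]
  have e1 : |x.1 + x.2 - x.2| = x.1 := by
    rw [add_sub_cancel_right, abs_of_nonneg h1]
  rw [e1]
  have e2 : |x.1 - (x.1 + x.2)| = x.2 := by
    have : x.1 - (x.1 + x.2) = -x.2 := by ring
    rw [this, abs_neg, abs_of_nonneg h2]
  rw [e2]

lemma applyW_nonneg (w : List Bool) (s : ℝ × ℝ) (h1 : 0 ≤ s.1) (h2 : 0 ≤ s.2) :
    0 ≤ (applyW w s).1 ∧ 0 ≤ (applyW w s).2 := by
  induction w with
  | nil => exact ⟨h1, h2⟩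
  | cons b w ih =>
    rcases b with _ | _
    · exact ⟨ih.2, abs_nonneg _⟩
    · exact ⟨ih.2, add_nonneg ih.1 ih.2⟩

lemma applyW_max (w : List Bool) (s : ℝ × ℝ) (h1 : 0 ≤ s.1) (h2 : 0 ≤ s.2) :
    max (applyW w s).1 (applyW w s).2 ≤ 2 ^ tc w * max s.1 s.2 := by
  induction w with
  | nil => simp [tc]
  | cons b w ih =>
    obtain ⟨q1, q2⟩ := applyW_nonneg w s h1 h2
    rcases b with _ | _
    · -- minus move
      simp only [applyW_cons, mv, tc]
      have h3 : |(applyW w s).2 - (applyW w s).1| ≤ max (applyW w s).1 (applyW w s).2 := by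
        rw [abs_le]
        constructor
        · have := le_max_left (applyW w s).1 (applyW w s).2; linarith
        · have := le_max_right (applyW w s).1 (applyW w s).2; linarith
      have h4 := le_max_right (applyW w s).1 (applyW w s).2
      exact max_le (le_trans h4 ih) (le_trans h3 ih)
    · -- plus move
      simp only [applyW_cons, mv, tc]
      have h4 := le_max_right (applyW w s).1 (applyW w s).2
      have h5 := le_max_left (applyW w s).1 (applyW w s).2
      have h6 : max (applyW w s).2 ((applyW w s).1 + (applyW w s).2)
          ≤ 2 * max (applyW w s).1 (applyW w s).2 := by
        apply max_le <;> nlinarith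
      calc max (applyW w s).2 ((applyW w s).1 + (applyW w s).2)
          ≤ 2 * max (applyW w s).1 (applyW w s).2 := h6
        _ ≤ 2 * (2 ^ tc w * max s.1 s.2) := by linarith
        _ = 2 ^ (tc w + 1) * max s.1 s.2 := by ring

/-- The master invariant. -/
lemma inv_main (c : ℕ → Bool) (st : ℕ → ℝ × ℝ) (h0 : st 0 = (1, 1))
    (hst : ∀ n, st (n + 1) = mv (c n) (st n)) (n : ℕ) :
    Good (proc c n).1 ∧
      ((proc c n).2.1 ∈ Icc (0:ℝ) 1 ∧ (proc c n).2.2 ∈ Icc (0:ℝ) 1) ∧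
      st n = applyW (proc c n).1 (proc c n).2 ∧
      wt (proc c n).1 ≤ phi c n := by
  induction n with
  | zero =>
    refine ⟨Good.nil, ?_, by simpa [proc] using h0, by simp [proc, wt, phi]⟩
    constructor <;> simp [proc]
  | succ n ih =>
    rcases e : proc c n with ⟨w, r⟩
    rw [e] at ih
    obtain ⟨hg, ⟨hr1, hr2⟩, hs, hw⟩ := ih
    have hproc : proc c (n + 1) = pushS (c n) (w, r) := by
      simp [proc, e]
    have hphieq : phi c (n + 1) = max (phi c n + gs c n) 0 := rfl
    rcases hb : c n with _ | _
    · -- minus move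
      have hgs : gs c n = -1 := by simp [gs, hb]
      have hstn : st (n + 1) = mv false (st n) := by rw [hst n, hb]
      cases hg with
      | nil =>
        have hp : pushS false (([] : List Bool), r) = ([], mv false r) := rfl
        rw [hb, hp] at hproc
        rw [hproc]
        refine ⟨Good.nil, ⟨⟨hr2.1, hr2.2⟩, ?_⟩, ?_, ?_⟩
        · simp only [mv]
          refine ⟨abs_nonneg _, ?_⟩
          rw [abs_le]
          obtain ⟨a1, a2⟩ := hr1
          obtain ⟨b1, b2⟩ := hr2
          constructor <;> linarith
        · rw [hstn, hs]; simp
        · simp [wt, hphieq, hgs]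
      | @ptop t hgt =>
        have hp : pushS false (true :: t, r) = (false :: true :: t, r) := rfl
        rw [hb, hp] at hproc
        rw [hproc]
        refine ⟨Good.mptop hgt, ⟨hr1, hr2⟩, ?_, ?_⟩
        · rw [hstn, hs]; simp
        · show wt (true :: t) - 1 ≤ phi c (n + 1)
          rw [hphieq, hgs]
          exact le_max_of_le_left (by linarith)
      | @mptop t hgt =>
        have hp : pushS false (false :: true :: t, r) = (t, r) := rfl
        rw [hb, hp] at hproc
        rw [hproc]
        obtain ⟨q1, q2⟩ := applyW_nonneg t r hr1.1 hr2.1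
        refine ⟨hgt, ⟨hr1, hr2⟩, ?_, ?_⟩
        · rw [hstn, hs]
          show mv false (applyW (false :: true :: t) r) = applyW t r
          simp only [applyW_cons]
          exact mmp (applyW t r) q1 q2
        · have hwt : wt (false :: true :: t) = wt t + 1 := by simp only [wt]; ring
          rw [hphieq, hgs]
          refine le_max_of_le_left ?_
          rw [hwt] at hw; linarith
    · -- plus move
      have hgs : gs c n = 2 := by simp [gs, hb]
      have hp : pushS true (w, r) = (true :: w, r) := rfl
      rw [hb, hp] at hproc
      rw [hproc]
      refine ⟨Good.ptop hg, ⟨hr1, hr2⟩, ?_, ?_⟩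
      · rw [hst n, hb, hs]; simp
      · show wt w + 2 ≤ phi c (n + 1)
        rw [hphieq, hgs]
        exact le_max_of_le_left (by linarith)

lemma max_sub_zero (a b : ℝ) : max (a - b) 0 = a - min b a := by
  rcases le_total a b with h | h
  · rw [min_eq_right h, sub_self, max_eq_right (by linarith)]
  · rw [min_eq_left h, max_eq_left (by linarith)]

lemma Sw_succ (c : ℕ → Bool) (n : ℕ) : Sw c (n + 1) = Sw c n + gs c n := by
  simp [Sw, Finset.sum_range_succ]

lemma mS_succ (c : ℕ → Bool) (n : ℕ) :
    mS c (n + 1) = min (Sw c (n + 1)) (mS c n) := by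
  classical
  have : Finset.range (n + 2) = insert (n + 1) (Finset.range (n + 1)) := by
    rw [Finset.range_add_one]
  simp only [mS, this]
  rw [Finset.inf'_insert]

lemma phi_eq (c : ℕ → Bool) (n : ℕ) : phi c n = Sw c n - mS c n := by
  induction n with
  | zero =>
    simp [phi, Sw, mS, Finset.range_one]
  | succ n ih =>
    have : phi c (n + 1) = max (phi c n + gs c n) 0 := rfl
    rw [this, ih, mS_succ c n, Sw_succ c n]
    have : Sw c n - mS c n + gs c n = (Sw c n + gs c n) - mS c n := by ring
    rw [this, max_sub_zero, min_comm]

lemma phi_nonneg (c : ℕ → Bool) (n : ℕ) : 0 ≤ phi c n := by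
  cases n with
  | zero => simp [phi]
  | succ n => exact le_max_right _ _

lemma mS_div_tendsto (c : ℕ → Bool) (m : ℝ) (hm : m ≤ 0)
    (hS : Tendsto (fun n => Sw c n / n) atTop (𝓝 m)) :
    Tendsto (fun n => mS c n / n) atTop (𝓝 m) := by
  rw [Metric.tendsto_atTop] at hS ⊢
  intro εp hεp
  obtain ⟨N₀, hN₀⟩ := hS (εp / 2) (by linarith)
  have hK : m - εp / 2 < 0 := by linarith
  set K := m - εp / 2 with hKdef
  set C := mS c N₀ with hCdef
  obtain ⟨N₁, hN₁⟩ := exists_nat_ge (C / K)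
  have hKN₁ : (N₁ : ℝ) * K ≤ C := (div_le_iff_of_neg hK).1 hN₁
  refine ⟨max (max N₀ N₁) 1, fun n hn => ?_⟩
  have hn0 : N₀ ≤ n := le_trans (le_trans (le_max_left _ _) (le_max_left _ _)) hn
  have hn1 : N₁ ≤ n := le_trans (le_trans (le_max_right _ _) (le_max_left _ _)) hn
  have hnp : 1 ≤ n := le_trans (le_max_right _ _) hn
  have hnpos : (0:ℝ) < n := by exact_mod_cast hnp
  have hlow : K * n ≤ mS c n := by
    refine Finset.le_inf' _ _ fun k hk => ?_
    rw [Finset.mem_range] at hk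
    by_cases hkN : k ≤ N₀
    · have h1 : C ≤ Sw c k := Finset.inf'_le _ (by simp [Finset.mem_range]; omega)
      have h2 : K * n ≤ K * N₁ := by
        have : (N₁ : ℝ) ≤ n := by exact_mod_cast hn1
        exact mul_le_mul_of_nonpos_left this hK.le
      nlinarith
    · have hkN' : N₀ ≤ k := by omega
      have hkpos : (0:ℝ) < k := by
        have : 1 ≤ k := by omega
        exact_mod_cast this
      have hd := hN₀ k hkN'
      rw [Real.dist_eq, abs_lt] at hd
      have h3 : K ≤ Sw c k / k := by linarith [hd.1]
      have h4 : K * k ≤ Sw c k := by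
        rw [le_div_iff₀ hkpos] at h3; linarith
      have h5 : K * n ≤ K * k := by
        have : (k : ℝ) ≤ n := by exact_mod_cast (by omega : k ≤ n)
        exact mul_le_mul_of_nonpos_left this hK.le
      linarith
  have hup : mS c n ≤ Sw c n := Finset.inf'_le _ (by simp)
  have hd := hN₀ n hn0
  rw [Real.dist_eq, abs_lt] at hd
  rw [Real.dist_eq, abs_lt]
  constructor
  · have : K ≤ mS c n / n := by
      rw [le_div_iff₀ hnpos]; linarith
    simp only [hKdef] at this
    linarith
  · have h6 : mS c n / n ≤ Sw c n / n := by
      exact (div_le_div_iff_of_pos_right hnpos).2 hup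
    linarith [hd.2]

lemma phi_div_tendsto (c : ℕ → Bool) (m : ℝ) (hm : m ≤ 0)
    (hS : Tendsto (fun n => Sw c n / n) atTop (𝓝 m)) :
    Tendsto (fun n => phi c n / n) atTop (𝓝 0) := by
  have h1 : Tendsto (fun n => mS c n / n) atTop (𝓝 m) := mS_div_tendsto c m hm hS
  have h2 : Tendsto (fun n : ℕ => Sw c n / n - mS c n / n) atTop (𝓝 (m - m)) := hS.sub h1
  rw [sub_self] at h2
  refine h2.congr fun n => ?_
  rw [phi_eq, sub_div]

end NRFaux

open ProbabilityTheory in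
lemma NRFaux.identDistrib_eps {Ω : Type*} [MeasurableSpace Ω] (μ : Measure Ω)
    [IsProbabilityMeasure μ] (p : ℝ)
    (ε : ℕ → Ω → ℝ) (hεmeas : ∀ n, Measurable (ε n))
    (hval : ∀ n ω, ε n ω = 1 ∨ ε n ω = -1)
    (hdist : ∀ n, μ {ω | ε n ω = 1} = ENNReal.ofReal p)
    (a b : ℕ) : IdentDistrib (ε a) (ε b) μ μ := by
  classical
  have key : ∀ n (s : Set ℝ), μ (ε n ⁻¹' s) =
      (if (1:ℝ) ∈ s then (if (-1:ℝ) ∈ s then 1 else ENNReal.ofReal p)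
        else (if (-1:ℝ) ∈ s then 1 - ENNReal.ofReal p else 0)) := by
    intro n s
    have hA : MeasurableSet (ε n ⁻¹' {(1:ℝ)}) := hεmeas n (measurableSet_singleton 1)
    have hA1 : μ (ε n ⁻¹' {(1:ℝ)}) = ENNReal.ofReal p := by
      have : ε n ⁻¹' {(1:ℝ)} = {ω | ε n ω = 1} := rfl
      rw [this, hdist n]
    by_cases h1 : (1:ℝ) ∈ s <;> by_cases h2 : (-1:ℝ) ∈ s <;>
      simp only [h1, h2, if_true, if_false]
    · have : ε n ⁻¹' s = univ := by
        ext ω; simp only [mem_preimage, mem_univ, iff_true]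
        rcases hval n ω with h | h <;> rw [h] <;> assumption
      rw [this]; exact measure_univ
    · have : ε n ⁻¹' s = ε n ⁻¹' {(1:ℝ)} := by
        ext ω; simp only [mem_preimage, mem_singleton_iff]
        rcases hval n ω with h | h <;> rw [h]
        · simp [h1]
        · exact iff_of_false h2 (by norm_num)
      rw [this, hA1]
    · have : ε n ⁻¹' s = (ε n ⁻¹' {(1:ℝ)})ᶜ := by
        ext ω; simp only [mem_preimage, mem_compl_iff, mem_singleton_iff]
        rcases hval n ω with h | h <;> rw [h]
        · exact iff_of_false h1 (by simp)
        · exact iff_of_true h2 (by norm_num)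
      rw [this, prob_compl_eq_one_sub hA, hA1]
    · have : ε n ⁻¹' s = ∅ := by
        ext ω; simp only [mem_preimage, mem_empty_iff_false, iff_false]
        rcases hval n ω with h | h <;> rw [h] <;> assumption
      rw [this]; exact measure_empty
  refine ⟨(hεmeas a).aemeasurable, (hεmeas b).aemeasurable, ?_⟩
  ext s hs
  rw [Measure.map_apply (hεmeas a) hs, Measure.map_apply (hεmeas b) hs, key, key]

open ProbabilityTheory

/-- Non-linear case, `0 < p ≤ 1/3`: almost surely `(1/n) log max(F̃_n,1) → 0`, i.e. the upper
Lyapunov exponent of the non-linear random Fibonacci sequence vanishes. -/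
theorem nonlinear_randomFibonacci_lyapunov_zero
    {Ω : Type*} [MeasurableSpace Ω] (μ : Measure Ω) [IsProbabilityMeasure μ]
    (p : ℝ) (hp0 : 0 < p) (hp1 : p ≤ 1 / 3)
    (ε : ℕ → Ω → ℝ) (hεmeas : ∀ n, Measurable (ε n))
    (hindep : ProbabilityTheory.iIndepFun ε μ)
    (hval : ∀ n ω, ε n ω = 1 ∨ ε n ω = -1)
    (hdist : ∀ n, μ {ω | ε n ω = 1} = ENNReal.ofReal p) :
    ∀ᵐ ω ∂μ, Tendsto (fun n : ℕ => (1 / (n : ℝ)) * Real.log (max (ntFibSeq ε n ω) 1))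
      atTop (𝓝 0) := by
  classical
  set ξ : ℕ → Ω → ℝ := fun k ω => (3 * ε (k + 3) ω + 1) / 2 with hξdef
  have mf : Measurable (fun x : ℝ => (3 * x + 1) / 2) := by fun_prop
  have hξmeas : ∀ k, Measurable (ξ k) := fun k => mf.comp (hεmeas (k + 3))
  have hbound : ∀ k ω, ‖ξ k ω‖ ≤ 2 := by
    intro k ω
    rcases hval (k + 3) ω with h | h <;> simp [hξdef, h] <;> norm_num
  have hint : Integrable (ξ 0) μ :=
    ⟨(hξmeas 0).aestronglyMeasurable,
      HasFiniteIntegral.of_bounded (C := 2) (ae_of_all _ fun ω => hbound 0 ω)⟩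
  have hpind : Pairwise (Function.onFun (IndepFun · · μ) ξ) := by
    intro i j hij
    exact (hindep.indepFun (show i + 3 ≠ j + 3 by omega)).comp mf mf
  have hident : ∀ i, IdentDistrib (ξ i) (ξ 0) μ μ := fun i =>
    (NRFaux.identDistrib_eps μ p ε hεmeas hval hdist (i + 3) (0 + 3)).comp mf
  have hE : μ[ξ 0] = 3 * p - 1 := by
    set A : Set Ω := ε 3 ⁻¹' {1} with hAdef
    have hA : MeasurableSet A := hεmeas 3 (measurableSet_singleton 1)
    have hAμ : μ A = ENNReal.ofReal p := hdist 3
    have hξ0 : ξ 0 = fun ω => 3 * A.indicator (fun _ => (1:ℝ)) ω - 1 := by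
      funext ω
      by_cases hω : ω ∈ A
      · have h1 : ε 3 ω = 1 := hω
        simp [hξdef, h1, indicator_of_mem hω]
        norm_num
      · have h1 : ε 3 ω = -1 := by
          rcases hval 3 ω with h | h
          · exact absurd h hω
          · exact h
        simp [hξdef, h1, indicator_of_notMem hω]
        norm_num
    have hind_int : Integrable (A.indicator (fun _ => (1:ℝ))) μ :=
      (integrable_const (1:ℝ)).indicator hA
    calc μ[ξ 0] = ∫ ω, (3 * A.indicator (fun _ => (1:ℝ)) ω - 1) ∂μ := by rw [hξ0]
      _ = (∫ ω, 3 * A.indicator (fun _ => (1:ℝ)) ω ∂μ) - ∫ _, (1:ℝ) ∂μ :=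
          integral_sub (hind_int.const_mul 3) (integrable_const 1)
      _ = 3 * ((μ A).toReal * 1) - 1 := by
          rw [integral_const_mul, integral_indicator_const (1:ℝ) hA, integral_const]
          simp [measureReal_def]
      _ = 3 * p - 1 := by rw [hAμ, ENNReal.toReal_ofReal hp0.le]; ring
  have hSLLN := strong_law_ae_real ξ hint hpind hident
  rw [hE] at hSLLN
  filter_upwards [hSLLN] with ω hω
  set c : ℕ → Bool := fun k => if ε (k + 3) ω = 1 then true else false with hc
  have hgs : ∀ k, NRFaux.gs c k = ξ k ω := by
    intro k
    by_cases h : ε (k + 3) ω = 1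
    · simp [NRFaux.gs, hc, h, hξdef]
      norm_num
    · have h' : ε (k + 3) ω = -1 := (hval (k + 3) ω).resolve_left h
      simp [NRFaux.gs, hc, h, hξdef, h']
      norm_num
  have hten : Tendsto (fun n => NRFaux.Sw c n / n) atTop (𝓝 (3 * p - 1)) := by
    refine hω.congr fun n => ?_
    congr 1
    show ∑ i ∈ Finset.range n, ξ i ω = ∑ k ∈ Finset.range n, NRFaux.gs c k
    exact Finset.sum_congr rfl fun k _ => (hgs k).symm
  have hm : 3 * p - 1 ≤ 0 := by linarith
  have hphi := NRFaux.phi_div_tendsto c _ hm hten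
  set st : ℕ → ℝ × ℝ := fun n => (ntFibSeq ε (n + 1) ω, ntFibSeq ε (n + 2) ω) with hstdef
  have hFnn : ∀ m, 0 ≤ ntFibSeq ε m ω := by
    intro m
    match m with
    | 0 => norm_num [ntFibSeq]
    | 1 => norm_num [ntFibSeq]
    | 2 => norm_num [ntFibSeq]
    | (m + 3) => exact abs_nonneg _
  have h0 : st 0 = (1, 1) := by
    simp only [hstdef]
    norm_num [ntFibSeq]
  have hstrec : ∀ n, st (n + 1) = NRFaux.mv (c n) (st n) := by
    intro n
    have hrec : ntFibSeq ε (n + 3) ω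
        = |ntFibSeq ε (n + 2) ω + ε (n + 3) ω * ntFibSeq ε (n + 1) ω| := rfl
    by_cases h : ε (n + 3) ω = 1
    · have hcn : c n = true := by simp [hc, h]
      rw [hcn]
      show (ntFibSeq ε (n + 2) ω, ntFibSeq ε (n + 3) ω)
          = ((st n).2, (st n).1 + (st n).2)
      simp only [Prod.mk.injEq]
      refine ⟨rfl, ?_⟩
      show ntFibSeq ε (n + 3) ω = ntFibSeq ε (n + 1) ω + ntFibSeq ε (n + 2) ω
      rw [hrec, h, one_mul, abs_of_nonneg (add_nonneg (hFnn _) (hFnn _)), add_comm]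
    · have h' : ε (n + 3) ω = -1 := (hval _ ω).resolve_left h
      have hcn : c n = false := by simp [hc, h]
      rw [hcn]
      show (ntFibSeq ε (n + 2) ω, ntFibSeq ε (n + 3) ω)
          = ((st n).2, |(st n).2 - (st n).1|)
      simp only [Prod.mk.injEq]
      refine ⟨rfl, ?_⟩
      show ntFibSeq ε (n + 3) ω = |ntFibSeq ε (n + 2) ω - ntFibSeq ε (n + 1) ω|
      rw [hrec, h']
      congr 1
      ring
  have hinv := NRFaux.inv_main c st h0 hstrec
  have hlog : ∀ n : ℕ, Real.log (max (ntFibSeq ε (n + 2) ω) 1)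
      ≤ NRFaux.phi c n * Real.log 2 := by
    intro n
    obtain ⟨hg, ⟨hr1, hr2⟩, hs, hw⟩ := hinv n
    have hmax := NRFaux.applyW_max (NRFaux.proc c n).1 (NRFaux.proc c n).2 hr1.1 hr2.1
    set w := (NRFaux.proc c n).1
    set r := (NRFaux.proc c n).2
    have hpow1 : (1:ℝ) ≤ 2 ^ NRFaux.tc w := one_le_pow₀ one_le_two
    have hF : ntFibSeq ε (n + 2) ω ≤ 2 ^ NRFaux.tc w := by
      have h2 : ntFibSeq ε (n + 2) ω = (st n).2 := rfl
      rw [h2, hs]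
      have hmr : max r.1 r.2 ≤ 1 := max_le hr1.2 hr2.2
      calc (NRFaux.applyW w r).2
          ≤ max (NRFaux.applyW w r).1 (NRFaux.applyW w r).2 := le_max_right _ _
        _ ≤ 2 ^ NRFaux.tc w * max r.1 r.2 := hmax
        _ ≤ 2 ^ NRFaux.tc w * 1 := mul_le_mul_of_nonneg_left hmr (by positivity)
        _ = 2 ^ NRFaux.tc w := mul_one _
    have hlog2 : Real.log (max (ntFibSeq ε (n + 2) ω) 1) ≤ Real.log (2 ^ NRFaux.tc w) := by
      refine (Real.log_le_log_iff ?_ (by positivity)).2 (max_le hF hpow1)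
      exact lt_of_lt_of_le zero_lt_one (le_max_right _ _)
    rw [Real.log_pow] at hlog2
    refine le_trans hlog2 ?_
    have htw : (NRFaux.tc w : ℝ) ≤ NRFaux.phi c n := le_trans (NRFaux.tc_le_wt hg) hw
    exact mul_le_mul_of_nonneg_right htw (Real.log_nonneg one_le_two)
  rw [← Filter.tendsto_add_atTop_iff_nat 2]
  have h1 : Tendsto (fun n : ℕ => NRFaux.phi c n / ((n : ℝ) + 2)) atTop (𝓝 0) := by
    refine tendsto_of_tendsto_of_tendsto_of_le_of_le' tendsto_const_nhds hphi ?_ ?_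
    · filter_upwards with n
      have := NRFaux.phi_nonneg c n
      positivity
    · filter_upwards [eventually_ge_atTop 1] with n hn
      have hnp : (0:ℝ) < n := by exact_mod_cast hn
      refine div_le_div_of_nonneg_left (NRFaux.phi_nonneg c n) hnp (by linarith)
  have hup : Tendsto (fun n : ℕ => Real.log 2 * (NRFaux.phi c n / ((n : ℝ) + 2)))
      atTop (𝓝 0) := by
    simpa using h1.const_mul (Real.log 2)
  refine tendsto_of_tendsto_of_tendsto_of_le_of_le' tendsto_const_nhds hup ?_ ?_
  · filter_upwards with n
    exact mul_nonneg (by positivity) (Real.log_nonneg (le_max_right _ _))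
  · filter_upwards with n
    have hcast : ((n + 2 : ℕ) : ℝ) = (n : ℝ) + 2 := by push_cast; ring
    show (1 / ((n + 2 : ℕ) : ℝ)) * Real.log (max (ntFibSeq ε (n + 2) ω) 1)
        ≤ Real.log 2 * (NRFaux.phi c n / ((n : ℝ) + 2))
    rw [hcast]
    calc (1 / ((n : ℝ) + 2)) * Real.log (max (ntFibSeq ε (n + 2) ω) 1)
        ≤ (1 / ((n : ℝ) + 2)) * (NRFaux.phi c n * Real.log 2) :=
          mul_le_mul_of_nonneg_left (hlog n) (by positivity)
      _ = Real.log 2 * (NRFaux.phi c n / ((n : ℝ) + 2)) := by ring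
end
end

section
/- For every α ∈ [0,1], the function x ↦ log x is ν_α-integrable, and the map γ : [0,1] → ℝ defined by γ(α) = ∫₀^∞ log x dν_α(x) is continuous on [0,1]. -/
open MeasureTheory Filter Set Topology

noncomputable section

namespace SBX

def step : (ℕ × ℕ) × (ℕ × ℕ) → Bool → (ℕ × ℕ) × (ℕ × ℕ)
  | ((a,b),(c,d)), true => ((a,b),(a+c,b+d))
  | ((a,b),(c,d)), false => ((a+c,b+d),(c,d))

lemma sbGo_cons (I : (ℕ × ℕ) × (ℕ × ℕ)) (b : Bool) (w : List Bool) :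
    sbGo I (b :: w) = sbGo (step I b) w := by
  obtain ⟨⟨a, b'⟩, c, d⟩ := I; cases b <;> simp [sbGo, step]

lemma sbGo_append (I : (ℕ × ℕ) × (ℕ × ℕ)) (w w' : List Bool) :
    sbGo I (w ++ w') = sbGo (sbGo I w) w' := by
  induction w generalizing I with
  | nil => simp [sbGo]
  | cons b t ih => simp [sbGo_cons, ih]

lemma sb_concat (w : List Bool) (b : Bool) : sb (w ++ [b]) = step (sb w) b := by
  rw [sb, sb, sbGo_append, sbGo_cons]; rfl

def Inv (I : (ℕ × ℕ) × (ℕ × ℕ)) : Prop := I.1.1 * I.2.2 + 1 = I.1.2 * I.2.1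

lemma Inv.step {I : (ℕ × ℕ) × (ℕ × ℕ)} (h : Inv I) (b : Bool) : Inv (SBX.step I b) := by
  obtain ⟨⟨a, b'⟩, c, d⟩ := I
  cases b <;> simp only [Inv, SBX.step] at h ⊢ <;> nlinarith [h]

lemma inv_sb (w : List Bool) : Inv (sb w) := by
  suffices h : ∀ I, Inv I → Inv (sbGo I w) by exact h _ (by simp [Inv])
  induction w with
  | nil => intro I h; simpa [sbGo] using h
  | cons b t ih => intro I h; rw [sbGo_cons]; exact ih _ (h.step b)

lemma Inv.b_pos {I : (ℕ × ℕ) × (ℕ × ℕ)} (h : Inv I) : 0 < I.1.2 := by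
  rcases Nat.eq_zero_or_pos I.1.2 with h0 | h0
  · exfalso; rw [Inv, h0] at h; omega
  · exact h0

lemma Inv.c_pos {I : (ℕ × ℕ) × (ℕ × ℕ)} (h : Inv I) : 0 < I.2.1 := by
  rcases Nat.eq_zero_or_pos I.2.1 with h0 | h0
  · exfalso; rw [Inv, h0] at h; omega
  · exact h0

lemma Inv.of_d_zero {I : (ℕ × ℕ) × (ℕ × ℕ)} (h : Inv I) (hd : I.2.2 = 0) :
    I.1.2 = 1 ∧ I.2.1 = 1 := by
  rw [Inv, hd] at h
  have h' : I.1.2 * I.2.1 = 1 := by omega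
  exact mul_eq_one.mp h'

/-- left endpoint as a real -/
def lE (I : (ℕ × ℕ) × (ℕ × ℕ)) : ℝ := (I.1.1 : ℝ) / (I.1.2 : ℝ)
def rE (I : (ℕ × ℕ) × (ℕ × ℕ)) : ℝ := (I.2.1 : ℝ) / (I.2.2 : ℝ)
def med (I : (ℕ × ℕ) × (ℕ × ℕ)) : ℝ := ((I.1.1 + I.2.1 : ℕ) : ℝ) / ((I.1.2 + I.2.2 : ℕ) : ℝ)

lemma med_eq (a b c d : ℕ) : med ((a,b),(c,d)) = ((a:ℝ)+(c:ℝ))/((b:ℝ)+(d:ℝ)) := by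
  simp only [med]; push_cast; ring_nf

lemma lE_le_med {I : (ℕ × ℕ) × (ℕ × ℕ)} (h : Inv I) : lE I ≤ med I := by
  have hbpos := h.b_pos
  obtain ⟨⟨a, b⟩, c, d⟩ := I
  have hb : (0:ℝ) < b := by exact_mod_cast hbpos
  have hbd : (0:ℝ) < (b:ℝ) + d := by positivity
  have h' : (a:ℝ) * d + 1 = b * c := by exact_mod_cast h
  rw [lE, med_eq]
  rw [div_le_div_iff₀ hb hbd]
  nlinarith [h']

lemma med_le_rE {I : (ℕ × ℕ) × (ℕ × ℕ)} (h : Inv I) (hd : 0 < I.2.2) : med I ≤ rE I := by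
  have hbpos := h.b_pos
  obtain ⟨⟨a, b⟩, c, d⟩ := I
  have hd' : (0:ℝ) < (d:ℝ) := by exact_mod_cast hd
  have hbd : (0:ℝ) < (b:ℝ) + d := by
    have : (0:ℝ) < (b:ℝ) := by exact_mod_cast hbpos
    linarith
  have h' : (a:ℝ) * d + 1 = b * c := by exact_mod_cast h
  rw [rE, med_eq]
  rw [div_le_div_iff₀ hbd hd']
  nlinarith [h']

lemma lE_le_rE {I : (ℕ × ℕ) × (ℕ × ℕ)} (h : Inv I) (hd : 0 < I.2.2) : lE I ≤ rE I :=
  (lE_le_med h).trans (med_le_rE h hd)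

lemma sbSet_def (a b c d : ℕ) :
    sbSet ((a,b),(c,d)) = if d = 0 then Set.Ici ((a : ℝ) / (b : ℝ))
      else Set.Icc ((a : ℝ) / (b : ℝ)) ((c : ℝ) / (d : ℝ)) := rfl

lemma measurableSet_sbSet (I : (ℕ × ℕ) × (ℕ × ℕ)) : MeasurableSet (sbSet I) := by
  obtain ⟨⟨a, b⟩, c, d⟩ := I
  rw [sbSet_def]; split <;> measurability

lemma sbSet_eq_union {I : (ℕ × ℕ) × (ℕ × ℕ)} (h : Inv I) :
    sbSet I = sbSet (step I true) ∪ sbSet (step I false) := by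
  have hbpos := h.b_pos
  obtain ⟨⟨a, b⟩, c, d⟩ := I
  rcases Nat.eq_zero_or_pos d with hd | hd
  · obtain ⟨hb1, hc1⟩ := h.of_d_zero hd
    simp only at hb1 hc1
    subst hd; subst hb1; subst hc1
    simp only [step, sbSet_def]
    norm_num
  · have h1 : lE ((a,b),(c,d)) ≤ med ((a,b),(c,d)) := lE_le_med h
    have h2 : med ((a,b),(c,d)) ≤ rE ((a,b),(c,d)) := med_le_rE h hd
    rw [lE] at h1; rw [rE] at h2; rw [med_eq] at h1 h2
    simp only [step, sbSet_def]
    rw [if_neg (by omega), if_neg (by omega), if_neg (by omega)]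
    have e1 : ((b + d : ℕ) : ℝ) = (b:ℝ) + d := by push_cast; ring
    have e2 : ((a + c : ℕ) : ℝ) = (a:ℝ) + c := by push_cast; ring
    rw [e1, e2, Set.Icc_union_Icc_eq_Icc h1 h2]

lemma sbSet_inter_subset {I : (ℕ × ℕ) × (ℕ × ℕ)} (h : Inv I) :
    sbSet (step I true) ∩ sbSet (step I false) ⊆ {med I} := by
  have hbpos := h.b_pos
  obtain ⟨⟨a, b⟩, c, d⟩ := I
  simp only at hbpos
  intro x hx
  simp only [step, sbSet_def] at hx
  rw [if_neg (by omega)] at hx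
  have e1 : ((b + d : ℕ) : ℝ) = (b:ℝ) + d := by push_cast; ring
  have e2 : ((a + c : ℕ) : ℝ) = (a:ℝ) + c := by push_cast; ring
  rcases Nat.eq_zero_or_pos d with hd | hd
  · subst hd
    rw [if_pos rfl] at hx
    obtain ⟨⟨_, h1⟩, h2⟩ := hx
    rw [Set.mem_Ici] at h2
    rw [Set.mem_singleton_iff, med_eq]
    push_cast at h1 h2 ⊢
    linarith
  · rw [if_neg (by omega)] at hx
    obtain ⟨⟨_, h1⟩, h2, _⟩ := hx
    rw [Set.mem_singleton_iff, med_eq]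
    push_cast at h1 h2 ⊢
    linarith

lemma step_subset {I : (ℕ × ℕ) × (ℕ × ℕ)} (h : Inv I) (b : Bool) :
    sbSet (step I b) ⊆ sbSet I := by
  rw [sbSet_eq_union h]; cases b
  · exact Set.subset_union_right
  · exact Set.subset_union_left

lemma lE_mem {I : (ℕ × ℕ) × (ℕ × ℕ)} (h : Inv I) : lE I ∈ sbSet I := by
  have h' := h
  obtain ⟨⟨a, b⟩, c, d⟩ := I
  rcases Nat.eq_zero_or_pos d with hd | hd
  · subst hd; rw [sbSet_def, if_pos rfl]; exact Set.self_mem_Ici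
  · rw [sbSet_def, if_neg (by omega)]
    exact Set.left_mem_Icc.2 (lE_le_rE h' hd)

lemma lE_step_true (I : (ℕ × ℕ) × (ℕ × ℕ)) : lE (step I true) = lE I := by
  obtain ⟨⟨a, b⟩, c, d⟩ := I; rfl

def sumI (I : (ℕ × ℕ) × (ℕ × ℕ)) : ℕ := I.1.1 + I.1.2 + I.2.1 + I.2.2

lemma sumI_step {I : (ℕ × ℕ) × (ℕ × ℕ)} (h : Inv I) (b : Bool) :
    sumI I + 1 ≤ sumI (step I b) := by
  have hb := h.b_pos
  have hc := h.c_pos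
  obtain ⟨⟨a, b'⟩, c, d⟩ := I
  cases b <;> simp only [sumI, step] at * <;> omega

lemma sumI_sb (w : List Bool) : w.length + 2 ≤ sumI (sb w) := by
  induction w using List.reverseRecOn with
  | nil => simp [sb, sbGo, sumI]
  | append_singleton t b ih =>
      have := sumI_step (inv_sb t) b
      rw [sb_concat]
      simp only [List.length_append, List.length_singleton]
      omega

lemma sumI_le {I : (ℕ × ℕ) × (ℕ × ℕ)} (h : Inv I) (ha : 1 ≤ I.1.1) (hd : 1 ≤ I.2.2) :
    sumI I ≤ 4 * (I.1.1 * I.2.2) + 2 := by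
  have hb := h.b_pos
  have hc := h.c_pos
  obtain ⟨⟨a, b⟩, c, d⟩ := I
  simp only at *
  have h' : a * d + 1 = b * c := h
  have h1 : b ≤ b * c := Nat.le_mul_of_pos_right _ hc
  have h2 : c ≤ b * c := Nat.le_mul_of_pos_left _ hb
  have h3 : a ≤ a * d := Nat.le_mul_of_pos_right _ hd
  have h4 : d ≤ a * d := Nat.le_mul_of_pos_left _ ha
  simp only [sumI]
  nlinarith [h']

lemma length_le_ad {w : List Bool} (ha : 1 ≤ (sb w).1.1) (hd : 1 ≤ (sb w).2.2) :
    w.length ≤ 4 * ((sb w).1.1 * (sb w).2.2) := by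
  have h1 := sumI_sb w
  have h2 := sumI_le (inv_sb w) ha hd
  linarith

lemma sb_repT (n : ℕ) : sb (List.replicate n true) = ((0,1),(1,n)) := by
  induction n with
  | zero => simp [sb, sbGo]
  | succ n ih =>
      rw [List.replicate_succ', sb_concat, ih]
      simp [step]; omega

lemma sb_repF (n : ℕ) : sb (List.replicate n false) = ((n,1),(1,0)) := by
  induction n with
  | zero => simp [sb, sbGo]
  | succ n ih =>
      rw [List.replicate_succ', sb_concat, ih]
      simp [step]

end SBX

namespace SBX

/-- the alternating weight -/
def fseq (α : ℝ) (r : ℕ) : ℝ := if Odd r then α else 1 - α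

def fac (α : ℝ) (r : ℕ) : Bool → ℝ
  | true => fseq α r
  | false => 1 - fseq α r

def Pa (α : ℝ) : ℕ → List Bool → ℝ
  | _, [] => 1
  | r, b :: t => fac α r b * Pa α (r+1) t

def P (α : ℝ) (w : List Bool) : ℝ := Pa α 0 w

variable {α : ℝ}

lemma fseq_mem (hα : α ∈ Set.Icc (0:ℝ) 1) (r : ℕ) : fseq α r ∈ Set.Icc (0:ℝ) 1 := by
  obtain ⟨h0, h1⟩ := hα
  rw [fseq]; split <;> exact ⟨by linarith, by linarith⟩

lemma fac_mem (hα : α ∈ Set.Icc (0:ℝ) 1) (r : ℕ) (b : Bool) : fac α r b ∈ Set.Icc (0:ℝ) 1 := by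
  obtain ⟨h0, h1⟩ := fseq_mem hα r
  cases b <;> simp only [fac] <;> constructor <;> linarith

lemma fac_add_fac (r : ℕ) : fac α r true + fac α r false = 1 := by
  simp [fac]

lemma fac_pair_le (hα : α ∈ Set.Icc (0:ℝ) 1) (r : ℕ) (b : Bool) :
    fac α r b * fac α (r+1) b ≤ 4⁻¹ := by
  obtain ⟨h0, h1⟩ := hα
  rcases Nat.even_or_odd r with hr | hr
  · have h2 : ¬ Odd r := Nat.not_odd_iff_even.mpr hr
    have h3 : Odd (r+1) := Even.add_one hr
    cases b <;> simp only [fac, fseq, if_pos h3, if_neg h2] <;>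
      nlinarith [sq_nonneg (1 - 2*α)]
  · have h3 : ¬ Odd (r+1) := Nat.not_odd_iff_even.mpr hr.add_one
    cases b <;> simp only [fac, fseq, if_pos hr, if_neg h3] <;>
      nlinarith [sq_nonneg (1 - 2*α)]

lemma Pa_nonneg (hα : α ∈ Set.Icc (0:ℝ) 1) (r : ℕ) (w : List Bool) : 0 ≤ Pa α r w := by
  induction w generalizing r with
  | nil => norm_num [Pa]
  | cons b t ih => exact mul_nonneg (fac_mem hα r b).1 (ih (r+1))

lemma Pa_le_one (hα : α ∈ Set.Icc (0:ℝ) 1) (r : ℕ) (w : List Bool) : Pa α r w ≤ 1 := by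
  induction w generalizing r with
  | nil => norm_num [Pa]
  | cons b t ih =>
      calc fac α r b * Pa α (r+1) t ≤ 1 * 1 :=
        mul_le_mul (fac_mem hα r b).2 (ih (r+1)) (Pa_nonneg hα _ _) zero_le_one
      _ = 1 := by ring

lemma Pa_append (r : ℕ) (w w' : List Bool) :
    Pa α r (w ++ w') = Pa α r w * Pa α (r + w.length) w' := by
  induction w generalizing r with
  | nil => simp [Pa]
  | cons b t ih =>
      have h0 : Pa α r ((b :: t) ++ w') = fac α r b * Pa α (r+1) (t ++ w') := rfl
      rw [h0, ih (r+1), List.length_cons,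
        show r + 1 + t.length = r + (t.length + 1) from by omega,
        show Pa α r (b :: t) = fac α r b * Pa α (r+1) t from rfl]
      ring

lemma P_concat (w : List Bool) (b : Bool) : P α (w ++ [b]) = P α w * fac α w.length b := by
  rw [P, P, Pa_append]
  simp [Pa]

lemma P_concat_le (hα : α ∈ Set.Icc (0:ℝ) 1) (w : List Bool) (b : Bool) :
    P α (w ++ [b]) ≤ P α w := by
  rw [P_concat]
  calc P α w * fac α w.length b ≤ P α w * 1 :=
    mul_le_mul_of_nonneg_left (fac_mem hα _ b).2 (Pa_nonneg hα _ _)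
  _ = P α w := by ring

lemma Pa_replicate_le (hα : α ∈ Set.Icc (0:ℝ) 1) (b : Bool) :
    ∀ n r, Pa α r (List.replicate n b) ≤ 4 * (2⁻¹:ℝ)^n := by
  intro n
  induction n using Nat.twoStepInduction with
  | zero => intro r; norm_num [Pa]
  | one =>
      intro r
      have h2 := (fac_mem hα r b).2
      have h3 : Pa α r (List.replicate 1 b) = fac α r b := by
        rw [List.replicate_one]; simp [Pa]
      rw [h3]
      norm_num
      linarith
  | more n ih _ =>
      intro r
      have hrep : List.replicate (n+2) b = b :: b :: List.replicate n b := rfl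
      rw [hrep]
      simp only [Pa]
      have h1 := fac_pair_le hα r b
      have h2 := ih (r+2)
      have h3 := Pa_nonneg hα (r+2) (List.replicate n b)
      have h4 : (0:ℝ) ≤ fac α r b := (fac_mem hα r b).1
      have h5 : (0:ℝ) ≤ fac α (r+1) b := (fac_mem hα (r+1) b).1
      calc fac α r b * (fac α (r+1) b * Pa α (r+1+1) (List.replicate n b))
          = (fac α r b * fac α (r+1) b) * Pa α (r+2) (List.replicate n b) := by ring_nf
        _ ≤ 4⁻¹ * (4 * (2⁻¹:ℝ)^n) := by
            apply mul_le_mul h1 h2 h3 (by norm_num)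
        _ = 4 * (2⁻¹:ℝ)^(n+2) := by ring
  
lemma P_replicate_le (hα : α ∈ Set.Icc (0:ℝ) 1) (b : Bool) (n : ℕ) :
    P α (List.replicate n b) ≤ 4 * (2⁻¹:ℝ)^n := Pa_replicate_le hα b n 0

end SBX

namespace SBX
section Meas
open scoped ENNReal

variable {α : ℝ} {ν : Measure ℝ}

lemma fseq_mul (α : ℝ) (r : ℕ) : fseq α r * fseq α (r+1) = α * (1 - α) := by
  rcases Nat.even_or_odd r with hr | hr
  · have h2 : ¬ Odd r := Nat.not_odd_iff_even.mpr hr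
    have h3 : Odd (r+1) := Even.add_one hr
    simp only [fseq, if_pos h3, if_neg h2]; ring
  · have h3 : ¬ Odd (r+1) := Nat.not_odd_iff_even.mpr hr.add_one
    simp only [fseq, if_pos hr, if_neg h3]

lemma lE_step_false (I : (ℕ × ℕ) × (ℕ × ℕ)) : lE (step I false) = med I := by
  obtain ⟨⟨a, b⟩, c, d⟩ := I; rfl

lemma sb_nil : sb [] = ((0,1),(1,0)) := rfl

lemma sbSet_nil : sbSet (sb []) = Set.Ici (0:ℝ) := by
  rw [sb_nil, sbSet_def, if_pos rfl]; norm_num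

lemma lE_append_rep (w : List Bool) (k : ℕ) :
    lE (sb (w ++ List.replicate k true)) = lE (sb w) := by
  induction k with
  | zero => simp
  | succ k ih =>
      rw [List.replicate_succ', ← List.append_assoc, sb_concat, lE_step_true, ih]

lemma sbSet_repT (n : ℕ) (hn : 1 ≤ n) :
    sbSet (sb (List.replicate n true)) = Set.Icc (0:ℝ) (1/(n:ℝ)) := by
  rw [sb_repT, sbSet_def, if_neg (by omega)]
  norm_num

lemma sbSet_repF (n : ℕ) : sbSet (sb (List.replicate n false)) = Set.Ici ((n:ℝ)) := by
  rw [sb_repF, sbSet_def, if_pos rfl]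
  norm_num

variable (hν : IsSternBrocotMeasure α ν) (hα : α ∈ Set.Icc (0:ℝ) 1)
include hν

lemma mass_univ : ν (sbSet (sb [])) = 1 := by
  haveI := hν.1
  rw [sbSet_nil]
  have h2 : ν (Set.Iio (0:ℝ)) + ν (Set.Ici 0) = ν Set.univ := by
    rw [← Set.Iio_union_Ici]
    exact (measure_union (Set.Iio_disjoint_Ici le_rfl) measurableSet_Ici).symm
  rw [hν.2.1, zero_add, measure_univ] at h2
  exact h2

lemma mass_left (w : List Bool) :
    ν (sbSet (sb (w ++ [true]))) = ENNReal.ofReal (fseq α w.length) * ν (sbSet (sb w)) := by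
  rcases w with _ | ⟨b, t⟩
  · have h1 : sbSet (sb [true]) = Set.Icc (0:ℝ) 1 := by
      have h : sb [true] = ((0,1),(1,1)) := rfl
      rw [h, sbSet_def, if_neg one_ne_zero]; norm_num
    have h2 : fseq α 0 = 1 - α := by simp [fseq]
    rw [List.nil_append, h1, hν.2.2.1, mass_univ hν, mul_one, List.length_nil, h2]
  · have h := hν.2.2.2.2 (b :: t) (by simp)
    rw [h, fseq]
    split_ifs <;> rfl

include hα

lemma mass_left2 (w : List Bool) :
    ν (sbSet (sb (w ++ [true, true]))) = ENNReal.ofReal (α * (1-α)) * ν (sbSet (sb w)) := by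
  have e : w ++ [true, true] = (w ++ [true]) ++ [true] := by simp
  rw [e, mass_left hν, mass_left hν, List.length_append, List.length_singleton, ← mul_assoc]
  congr 1
  rw [← ENNReal.ofReal_mul (fseq_mem hα (w.length+1)).1,
    mul_comm (fseq α (w.length+1)), fseq_mul]

omit hν in
lemma ofReal_aa_le : ENNReal.ofReal (α * (1-α)) ≤ 2⁻¹ := by
  obtain ⟨h0, h1⟩ := hα
  have h : α * (1-α) ≤ (2:ℝ)⁻¹ := by nlinarith [sq_nonneg (1 - 2*α)]
  calc ENNReal.ofReal (α * (1-α)) ≤ ENNReal.ofReal (2:ℝ)⁻¹ := ENNReal.ofReal_le_ofReal h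
    _ = 2⁻¹ := by
        rw [ENNReal.ofReal_inv_of_pos (by norm_num)]
        norm_num

lemma mass_rep2 (w : List Bool) (j : ℕ) :
    ν (sbSet (sb (w ++ List.replicate (2*j) true))) ≤ (2⁻¹ : ℝ≥0∞)^j := by
  haveI := hν.1
  induction j with
  | zero => simpa using prob_le_one
  | succ j ih =>
      have e : w ++ List.replicate (2*(j+1)) true
          = (w ++ List.replicate (2*j) true) ++ [true, true] := by
        rw [show 2*(j+1) = 2*j + 2 from by ring, List.replicate_add, List.append_assoc]
        rfl
      rw [e, mass_left2 hν hα]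
      calc ENNReal.ofReal (α * (1-α)) * ν (sbSet (sb (w ++ List.replicate (2*j) true)))
          ≤ 2⁻¹ * (2⁻¹:ℝ≥0∞)^j := mul_le_mul' (ofReal_aa_le hα) ih
        _ = (2⁻¹:ℝ≥0∞)^(j+1) := by ring

lemma atom_null (w : List Bool) : ν {lE (sb w)} = 0 := by
  have hb : ∀ j : ℕ, ν {lE (sb w)} ≤ (2⁻¹ : ℝ≥0∞)^j := by
    intro j
    refine le_trans (measure_mono ?_) (mass_rep2 hν hα w j)
    rw [Set.singleton_subset_iff, ← lE_append_rep w (2*j)]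
    exact lE_mem (inv_sb _)
  have ht : Tendsto (fun j : ℕ => (2⁻¹ : ℝ≥0∞)^j) atTop (𝓝 0) :=
    ENNReal.tendsto_pow_atTop_nhds_zero_of_lt_one (by norm_num)
  exact le_antisymm (ge_of_tendsto' ht hb) zero_le

lemma mass_split (w : List Bool) :
    ν (sbSet (sb w)) = ν (sbSet (sb (w ++ [true]))) + ν (sbSet (sb (w ++ [false]))) := by
  have hI := inv_sb w
  have hu : sbSet (sb (w ++ [true])) ∪ sbSet (sb (w ++ [false])) = sbSet (sb w) := by
    rw [sb_concat, sb_concat, ← sbSet_eq_union hI]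
  have hmed : ν {med (sb w)} = 0 := by
    rw [show med (sb w) = lE (sb (w ++ [false])) from by rw [sb_concat, lE_step_false]]
    exact atom_null hν hα (w ++ [false])
  have hsub : sbSet (sb (w ++ [true])) ∩ sbSet (sb (w ++ [false])) ⊆ {med (sb w)} := by
    rw [sb_concat, sb_concat]; exact sbSet_inter_subset hI
  have hinter : ν (sbSet (sb (w ++ [true])) ∩ sbSet (sb (w ++ [false]))) = 0 :=
    le_antisymm (le_trans (measure_mono hsub) (le_of_eq hmed)) zero_le
  have h := measure_union_add_inter (μ := ν) (sbSet (sb (w ++ [true])))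
    (measurableSet_sbSet (sb (w ++ [false])))
  rw [hu, hinter, add_zero] at h
  exact h

lemma mass_right (w : List Bool) :
    ν (sbSet (sb (w ++ [false]))) = ENNReal.ofReal (1 - fseq α w.length) * ν (sbSet (sb w)) := by
  haveI := hν.1
  have hf := fseq_mem hα w.length
  have hsum : ENNReal.ofReal (fseq α w.length) + ENNReal.ofReal (1 - fseq α w.length) = 1 := by
    rw [← ENNReal.ofReal_add hf.1 (by linarith [hf.2])]
    norm_num
  have hs := mass_split hν hα w
  rw [mass_left hν] at hs
  have h1 : ν (sbSet (sb w)) = 1 * ν (sbSet (sb w)) := (one_mul _).symm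
  nth_rewrite 1 [h1] at hs
  rw [← hsum, add_mul] at hs
  have hfin : ENNReal.ofReal (fseq α w.length) * ν (sbSet (sb w)) ≠ ⊤ :=
    ENNReal.mul_ne_top ENNReal.ofReal_ne_top (measure_ne_top ν _)
  exact (ENNReal.add_right_inj hfin).mp hs |>.symm

lemma mass_eq_P (w : List Bool) : ν (sbSet (sb w)) = ENNReal.ofReal (P α w) := by
  induction w using List.reverseRecOn with
  | nil => rw [mass_univ hν, show P α [] = 1 from rfl, ENNReal.ofReal_one]
  | append_singleton t b ih =>
      have hfac := fac_mem hα t.length b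
      cases b
      · rw [mass_right hν hα, ih, P_concat, ENNReal.ofReal_mul' hfac.1, mul_comm]
        rfl
      · rw [mass_left hν, ih, P_concat, ENNReal.ofReal_mul' hfac.1, mul_comm]
        rfl

lemma mass_Icc (n : ℕ) (hn : 1 ≤ n) :
    ν (Set.Icc (0:ℝ) (1/(n:ℝ))) = ENNReal.ofReal (P α (List.replicate n true)) := by
  rw [← sbSet_repT n hn, mass_eq_P hν hα]

lemma mass_Ici (n : ℕ) :
    ν (Set.Ici ((n:ℝ))) = ENNReal.ofReal (P α (List.replicate n false)) := by
  rw [← sbSet_repF n, mass_eq_P hν hα]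

end Meas
end SBX

namespace SBX
section Integ
open scoped ENNReal

variable {α : ℝ} {ν : Measure ℝ}

lemma ofReal_pow_half (m : ℕ) : ENNReal.ofReal (4*(2⁻¹:ℝ)^m) = 4 * (2⁻¹:ℝ≥0∞)^m := by
  rw [ENNReal.ofReal_mul (by norm_num), ENNReal.ofReal_pow (by norm_num)]
  congr 1
  · norm_num
  · congr 1
    rw [ENNReal.ofReal_inv_of_pos (by norm_num)]
    norm_num

lemma tsum_half_geo : ∑' j:ℕ, (2⁻¹:ℝ≥0∞)^j = 2 := by
  have hh : (1:ℝ≥0∞) - 2⁻¹ = 2⁻¹ :=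
    ENNReal.sub_eq_of_eq_add (by norm_num) (ENNReal.inv_two_add_inv_two).symm
  rw [ENNReal.tsum_geometric, hh, inv_inv]

lemma log_telescope (n : ℕ) (m : ℕ) :
    ∑ j ∈ Finset.range m, (Real.log ((n:ℝ)+j+1) - Real.log ((n:ℝ)+j))
      = Real.log ((n:ℝ)+m) - Real.log (n:ℝ) := by
  have h := Finset.sum_range_sub (fun j : ℕ => Real.log ((n:ℝ)+j)) m
  push_cast at h
  calc ∑ j ∈ Finset.range m, (Real.log ((n:ℝ)+j+1) - Real.log ((n:ℝ)+j))
      = ∑ j ∈ Finset.range m, (Real.log ((n:ℝ)+((j:ℝ)+1)) - Real.log ((n:ℝ)+j)) := by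
        apply Finset.sum_congr rfl; intro j _; congr 2; ring
    _ = Real.log ((n:ℝ)+m) - Real.log ((n:ℝ)+0) := h
    _ = Real.log ((n:ℝ)+m) - Real.log (n:ℝ) := by norm_num

lemma log_diff_le (x : ℝ) (hx : 1 ≤ x) : Real.log (x+1) - Real.log x ≤ 1/x := by
  have hx0 : (0:ℝ) < x := by linarith
  rw [← Real.log_div (by linarith) (ne_of_gt hx0)]
  have h := Real.log_le_sub_one_of_pos (show (0:ℝ) < (x+1)/x by positivity)
  have : (x+1)/x - 1 = 1/x := by field_simp; ring
  linarith [h, this ▸ h]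

end Integ
end SBX

namespace SBX
section Tails
open scoped ENNReal

variable {α : ℝ} {ν : Measure ℝ}
variable (hν : IsSternBrocotMeasure α ν) (hα : α ∈ Set.Icc (0:ℝ) 1)
include hν hα

lemma mass_Icc_le (n : ℕ) (hn : 1 ≤ n) :
    ν (Set.Icc (0:ℝ) (1/(n:ℝ))) ≤ 4 * (2⁻¹:ℝ≥0∞)^n := by
  rw [mass_Icc hν hα n hn, ← ofReal_pow_half]
  exact ENNReal.ofReal_le_ofReal (P_replicate_le hα true n)

lemma mass_Ici_le (n : ℕ) :
    ν (Set.Ici ((n:ℝ))) ≤ 4 * (2⁻¹:ℝ≥0∞)^n := by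
  rw [mass_Ici hν hα n, ← ofReal_pow_half]
  exact ENNReal.ofReal_le_ofReal (P_replicate_le hα false n)

lemma tail_Icc (n : ℕ) (hn : 1 ≤ n) :
    ∫⁻ x in Set.Icc (0:ℝ) (1/(n:ℝ)), ENNReal.ofReal ‖Real.log x‖ ∂ν
      ≤ ((n:ℝ≥0∞) + 2) * (4 * (2⁻¹:ℝ≥0∞)^n) := by
  have hn' : (0:ℝ) < n := by exact_mod_cast hn
  set s : Set ℝ := Set.Icc (0:ℝ) (1/(n:ℝ)) with hs
  set F : ℝ → ℝ≥0∞ := fun x =>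
    ENNReal.ofReal (Real.log n) +
      ∑' j:ℕ, (Set.Icc (0:ℝ) (1/((n+j:ℕ):ℝ))).indicator
        (fun _ => ENNReal.ofReal (Real.log ((n:ℝ)+j+1) - Real.log ((n:ℝ)+j))) x
    with hF
  have hterm_nn : ∀ j : ℕ, (0:ℝ) ≤ Real.log ((n:ℝ)+j+1) - Real.log ((n:ℝ)+j) := by
    intro j
    have := Real.log_le_log (show (0:ℝ) < (n:ℝ)+j by positivity)
      (show (n:ℝ)+j ≤ (n:ℝ)+j+1 by linarith)
    linarith
  have hmeas : Measurable F := by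
    apply Measurable.fun_add measurable_const
    apply Measurable.ennreal_tsum
    intro j
    exact measurable_const.indicator measurableSet_Icc
  have hpt : ∀ x ∈ s, ENNReal.ofReal ‖Real.log x‖ ≤ F x := by
    intro x hx
    obtain ⟨hx0, hx1⟩ := hx
    rcases eq_or_lt_of_le hx0 with h0 | h0
    · rw [← h0]; simp [Real.log_zero, F]
    · have hxle1 : x ≤ 1 := le_trans hx1 (by
        rw [div_le_one hn']; exact_mod_cast hn)
      have hlog : ‖Real.log x‖ = - Real.log x := by
        rw [Real.norm_eq_abs, abs_of_nonpos (Real.log_nonpos (le_of_lt h0) hxle1)]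
      set k := Nat.floor (1/x) with hk
      have hkn : n ≤ k := Nat.le_floor (by
        rw [le_div_iff₀ h0]
        calc (n:ℝ)*x ≤ (n:ℝ) * (1/(n:ℝ)) := mul_le_mul_of_nonneg_left hx1 (le_of_lt hn')
          _ = 1 := by field_simp)
      have hxk : 1/x < (k:ℝ)+1 := Nat.lt_floor_add_one _
      have hfloor : (k:ℝ) ≤ 1/x := Nat.floor_le (by positivity)
      have hlogle : - Real.log x ≤ Real.log ((k:ℝ)+1) := by
        have h1 : (1:ℝ) ≤ x * ((k:ℝ)+1) := by
          rw [div_lt_iff₀ h0] at hxk; linarith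
        have h2 := Real.log_nonneg h1
        rw [Real.log_mul (ne_of_gt h0) (by positivity)] at h2
        linarith
      set m := k + 1 - n with hm
      have hmk : k + 1 = n + m := by omega
      have hlogk : Real.log ((k:ℝ)+1)
          = Real.log (n:ℝ) + ∑ j ∈ Finset.range m, (Real.log ((n:ℝ)+j+1) - Real.log ((n:ℝ)+j)) := by
        rw [log_telescope n m]
        have : ((k:ℝ)+1) = (n:ℝ) + (m:ℝ) := by exact_mod_cast congrArg (Nat.cast : ℕ → ℝ) hmk
        rw [this]; ring
      calc ENNReal.ofReal ‖Real.log x‖ = ENNReal.ofReal (- Real.log x) := by rw [hlog]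
        _ ≤ ENNReal.ofReal (Real.log ((k:ℝ)+1)) := ENNReal.ofReal_le_ofReal hlogle
        _ = ENNReal.ofReal (Real.log (n:ℝ))
            + ENNReal.ofReal (∑ j ∈ Finset.range m, (Real.log ((n:ℝ)+j+1) - Real.log ((n:ℝ)+j))) := by
              rw [hlogk, ENNReal.ofReal_add (Real.log_natCast_nonneg n)
                (Finset.sum_nonneg (fun j _ => hterm_nn j))]
        _ ≤ ENNReal.ofReal (Real.log (n:ℝ))
            + ∑' j:ℕ, (Set.Icc (0:ℝ) (1/((n+j:ℕ):ℝ))).indicator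
                (fun _ => ENNReal.ofReal (Real.log ((n:ℝ)+j+1) - Real.log ((n:ℝ)+j))) x := by
              apply add_le_add le_rfl
              rw [ENNReal.ofReal_sum_of_nonneg (fun j _ => hterm_nn j)]
              refine le_trans (le_of_eq (Finset.sum_congr rfl ?_)) (ENNReal.sum_le_tsum _)
              intro j hj
              rw [Finset.mem_range] at hj
              have hmem : x ∈ Set.Icc (0:ℝ) (1/((n+j:ℕ):ℝ)) := by
                constructor
                · exact hx0
                · have hnj : (0:ℝ) < ((n+j:ℕ):ℝ) := by positivity
                  rw [le_div_iff₀ hnj]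
                  have hjk : n + j ≤ k := by omega
                  have h5 : ((n+j:ℕ):ℝ) ≤ (k:ℝ) := Nat.cast_le.mpr hjk
                  calc x * ((n+j:ℕ):ℝ) ≤ x * (1/x) := by
                        apply mul_le_mul_of_nonneg_left _ (le_of_lt h0)
                        linarith
                    _ = 1 := by field_simp
              rw [Set.indicator_of_mem hmem]
        _ = F x := by rw [hF]
  have step1 : ∫⁻ x in s, ENNReal.ofReal ‖Real.log x‖ ∂ν ≤ ∫⁻ x in s, F x ∂ν :=
    setLIntegral_mono hmeas hpt
  have step2 : ∫⁻ x in s, F x ∂ν ≤ ((n:ℝ≥0∞) + 2) * (4 * (2⁻¹:ℝ≥0∞)^n) := by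
    rw [hF, lintegral_add_left measurable_const]
    have hconst : ∫⁻ _ in s, ENNReal.ofReal (Real.log n) ∂ν
        = ENNReal.ofReal (Real.log n) * ν s := by
      rw [lintegral_const, Measure.restrict_apply_univ]
    have hconst_le : ENNReal.ofReal (Real.log n) * ν s ≤ (n:ℝ≥0∞) * (4 * (2⁻¹:ℝ≥0∞)^n) := by
      apply mul_le_mul'
      · calc ENNReal.ofReal (Real.log n) ≤ ENNReal.ofReal (n:ℝ) :=
              ENNReal.ofReal_le_ofReal (by
                have := Real.log_le_sub_one_of_pos hn'
                linarith)
          _ = (n:ℝ≥0∞) := ENNReal.ofReal_natCast n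
      · exact mass_Icc_le hν hα n hn
    have htsum : ∫⁻ x in s, (∑' j:ℕ, (Set.Icc (0:ℝ) (1/((n+j:ℕ):ℝ))).indicator
        (fun _ => ENNReal.ofReal (Real.log ((n:ℝ)+j+1) - Real.log ((n:ℝ)+j))) x) ∂ν
          ≤ 2 * (4 * (2⁻¹:ℝ≥0∞)^n) := by
      rw [lintegral_tsum (fun j => (measurable_const.indicator measurableSet_Icc).aemeasurable)]
      have hj : ∀ j : ℕ, ∫⁻ x in s, (Set.Icc (0:ℝ) (1/((n+j:ℕ):ℝ))).indicator
          (fun _ => ENNReal.ofReal (Real.log ((n:ℝ)+j+1) - Real.log ((n:ℝ)+j))) x ∂ν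
            ≤ 4 * (2⁻¹:ℝ≥0∞)^(n+j) := by
        intro j
        rw [lintegral_indicator_const measurableSet_Icc, Measure.restrict_apply measurableSet_Icc]
        have h1 : ENNReal.ofReal (Real.log ((n:ℝ)+j+1) - Real.log ((n:ℝ)+j)) ≤ 1 := by
          have h2 := log_diff_le ((n:ℝ)+j) (by
            have : (1:ℝ) ≤ (n:ℝ) := by exact_mod_cast hn
            have : (0:ℝ) ≤ (j:ℝ) := by positivity
            linarith)
          have h3 : 1/((n:ℝ)+j) ≤ 1 := by
            rw [div_le_one (by positivity)]
            have : (1:ℝ) ≤ (n:ℝ) := by exact_mod_cast hn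
            have : (0:ℝ) ≤ (j:ℝ) := by positivity
            linarith
          calc ENNReal.ofReal (Real.log ((n:ℝ)+j+1) - Real.log ((n:ℝ)+j))
              ≤ ENNReal.ofReal 1 := ENNReal.ofReal_le_ofReal (by linarith)
            _ = 1 := ENNReal.ofReal_one
        calc ENNReal.ofReal (Real.log ((n:ℝ)+j+1) - Real.log ((n:ℝ)+j))
              * ν (Set.Icc (0:ℝ) (1/((n+j:ℕ):ℝ)) ∩ s)
            ≤ 1 * ν (Set.Icc (0:ℝ) (1/((n+j:ℕ):ℝ))) :=
              mul_le_mul' h1 (measure_mono Set.inter_subset_left)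
          _ = ν (Set.Icc (0:ℝ) (1/((n+j:ℕ):ℝ))) := one_mul _
          _ ≤ 4 * (2⁻¹:ℝ≥0∞)^(n+j) := mass_Icc_le hν hα (n+j) (by omega)
      calc ∑' j:ℕ, ∫⁻ x in s, (Set.Icc (0:ℝ) (1/((n+j:ℕ):ℝ))).indicator
            (fun _ => ENNReal.ofReal (Real.log ((n:ℝ)+j+1) - Real.log ((n:ℝ)+j))) x ∂ν
          ≤ ∑' j:ℕ, 4 * (2⁻¹:ℝ≥0∞)^(n+j) := ENNReal.tsum_le_tsum hj
        _ = (4 * (2⁻¹:ℝ≥0∞)^n) * ∑' j:ℕ, (2⁻¹:ℝ≥0∞)^j := by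
            rw [← ENNReal.tsum_mul_left]
            congr 1; funext j; rw [pow_add]; ring
        _ = 2 * (4 * (2⁻¹:ℝ≥0∞)^n) := by rw [tsum_half_geo]; ring
    calc ∫⁻ _ in s, ENNReal.ofReal (Real.log n) ∂ν + _ 
        ≤ (n:ℝ≥0∞) * (4 * (2⁻¹:ℝ≥0∞)^n) + 2 * (4 * (2⁻¹:ℝ≥0∞)^n) := by
          rw [hconst]
          exact add_le_add hconst_le htsum
      _ = ((n:ℝ≥0∞) + 2) * (4 * (2⁻¹:ℝ≥0∞)^n) := by ring
  exact le_trans step1 step2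

end Tails
end SBX

namespace SBX
section Tails2
open scoped ENNReal

variable {α : ℝ} {ν : Measure ℝ}
variable (hν : IsSternBrocotMeasure α ν) (hα : α ∈ Set.Icc (0:ℝ) 1)
include hν hα

lemma tail_Ici (n : ℕ) (hn : 1 ≤ n) :
    ∫⁻ x in Set.Ici ((n:ℝ)), ENNReal.ofReal ‖Real.log x‖ ∂ν
      ≤ ((n:ℝ≥0∞) + 2) * (4 * (2⁻¹:ℝ≥0∞)^n) := by
  have hn' : (0:ℝ) < n := by exact_mod_cast hn
  have hn1 : (1:ℝ) ≤ (n:ℝ) := by exact_mod_cast hn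
  set s : Set ℝ := Set.Ici ((n:ℝ)) with hs
  set F : ℝ → ℝ≥0∞ := fun x =>
    ENNReal.ofReal (Real.log n) +
      ∑' j:ℕ, (Set.Ici (((n+j:ℕ):ℝ))).indicator
        (fun _ => ENNReal.ofReal (Real.log ((n:ℝ)+j+1) - Real.log ((n:ℝ)+j))) x
    with hF
  have hterm_nn : ∀ j : ℕ, (0:ℝ) ≤ Real.log ((n:ℝ)+j+1) - Real.log ((n:ℝ)+j) := by
    intro j
    have := Real.log_le_log (show (0:ℝ) < (n:ℝ)+j by positivity)
      (show (n:ℝ)+j ≤ (n:ℝ)+j+1 by linarith)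
    linarith
  have hmeas : Measurable F := by
    apply Measurable.fun_add measurable_const
    apply Measurable.ennreal_tsum
    intro j
    exact measurable_const.indicator measurableSet_Ici
  have hpt : ∀ x ∈ s, ENNReal.ofReal ‖Real.log x‖ ≤ F x := by
    intro x hx
    rw [Set.mem_Ici] at hx
    have hx1 : (1:ℝ) ≤ x := le_trans hn1 hx
    have hx0 : (0:ℝ) < x := by linarith
    have hlog : ‖Real.log x‖ = Real.log x := by
      rw [Real.norm_eq_abs, abs_of_nonneg (Real.log_nonneg hx1)]
    set k := Nat.floor x with hk
    have hkn : n ≤ k := Nat.le_floor (by exact_mod_cast hx)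
    have hxk : x < (k:ℝ)+1 := Nat.lt_floor_add_one _
    have hfloor : (k:ℝ) ≤ x := Nat.floor_le (by positivity)
    have hlogle : Real.log x ≤ Real.log ((k:ℝ)+1) :=
      Real.log_le_log hx0 (by linarith)
    set m := k + 1 - n with hm
    have hmk : k + 1 = n + m := by omega
    have hlogk : Real.log ((k:ℝ)+1)
        = Real.log (n:ℝ) + ∑ j ∈ Finset.range m, (Real.log ((n:ℝ)+j+1) - Real.log ((n:ℝ)+j)) := by
      rw [log_telescope n m]
      have : ((k:ℝ)+1) = (n:ℝ) + (m:ℝ) := by exact_mod_cast congrArg (Nat.cast : ℕ → ℝ) hmk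
      rw [this]; ring
    calc ENNReal.ofReal ‖Real.log x‖ = ENNReal.ofReal (Real.log x) := by rw [hlog]
      _ ≤ ENNReal.ofReal (Real.log ((k:ℝ)+1)) := ENNReal.ofReal_le_ofReal hlogle
      _ = ENNReal.ofReal (Real.log (n:ℝ))
          + ENNReal.ofReal (∑ j ∈ Finset.range m, (Real.log ((n:ℝ)+j+1) - Real.log ((n:ℝ)+j))) := by
            rw [hlogk, ENNReal.ofReal_add (Real.log_natCast_nonneg n)
              (Finset.sum_nonneg (fun j _ => hterm_nn j))]
      _ ≤ ENNReal.ofReal (Real.log (n:ℝ))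
          + ∑' j:ℕ, (Set.Ici (((n+j:ℕ):ℝ))).indicator
              (fun _ => ENNReal.ofReal (Real.log ((n:ℝ)+j+1) - Real.log ((n:ℝ)+j))) x := by
            apply add_le_add le_rfl
            rw [ENNReal.ofReal_sum_of_nonneg (fun j _ => hterm_nn j)]
            refine le_trans (le_of_eq (Finset.sum_congr rfl ?_)) (ENNReal.sum_le_tsum _)
            intro j hj
            rw [Finset.mem_range] at hj
            have hjk : n + j ≤ k := by omega
            have hmem : x ∈ Set.Ici (((n+j:ℕ):ℝ)) := by
              rw [Set.mem_Ici]
              have h5 : ((n+j:ℕ):ℝ) ≤ (k:ℝ) := Nat.cast_le.mpr hjk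
              linarith
            rw [Set.indicator_of_mem hmem]
      _ = F x := by rw [hF]
  have step1 : ∫⁻ x in s, ENNReal.ofReal ‖Real.log x‖ ∂ν ≤ ∫⁻ x in s, F x ∂ν :=
    setLIntegral_mono hmeas hpt
  have step2 : ∫⁻ x in s, F x ∂ν ≤ ((n:ℝ≥0∞) + 2) * (4 * (2⁻¹:ℝ≥0∞)^n) := by
    rw [hF, lintegral_add_left measurable_const]
    have hconst : ∫⁻ _ in s, ENNReal.ofReal (Real.log n) ∂ν
        = ENNReal.ofReal (Real.log n) * ν s := by
      rw [lintegral_const, Measure.restrict_apply_univ]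
    have hconst_le : ENNReal.ofReal (Real.log n) * ν s ≤ (n:ℝ≥0∞) * (4 * (2⁻¹:ℝ≥0∞)^n) := by
      apply mul_le_mul'
      · calc ENNReal.ofReal (Real.log n) ≤ ENNReal.ofReal (n:ℝ) :=
              ENNReal.ofReal_le_ofReal (by
                have := Real.log_le_sub_one_of_pos hn'
                linarith)
          _ = (n:ℝ≥0∞) := ENNReal.ofReal_natCast n
      · exact mass_Ici_le hν hα n
    have htsum : ∫⁻ x in s, (∑' j:ℕ, (Set.Ici (((n+j:ℕ):ℝ))).indicator
        (fun _ => ENNReal.ofReal (Real.log ((n:ℝ)+j+1) - Real.log ((n:ℝ)+j))) x) ∂ν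
          ≤ 2 * (4 * (2⁻¹:ℝ≥0∞)^n) := by
      rw [lintegral_tsum (fun j => (measurable_const.indicator measurableSet_Ici).aemeasurable)]
      have hj : ∀ j : ℕ, ∫⁻ x in s, (Set.Ici (((n+j:ℕ):ℝ))).indicator
          (fun _ => ENNReal.ofReal (Real.log ((n:ℝ)+j+1) - Real.log ((n:ℝ)+j))) x ∂ν
            ≤ 4 * (2⁻¹:ℝ≥0∞)^(n+j) := by
        intro j
        rw [lintegral_indicator_const measurableSet_Ici, Measure.restrict_apply measurableSet_Ici]
        have h1 : ENNReal.ofReal (Real.log ((n:ℝ)+j+1) - Real.log ((n:ℝ)+j)) ≤ 1 := by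
          have h2 := log_diff_le ((n:ℝ)+j) (by
            have : (0:ℝ) ≤ (j:ℝ) := by positivity
            linarith)
          have h3 : 1/((n:ℝ)+j) ≤ 1 := by
            rw [div_le_one (by positivity)]
            have : (0:ℝ) ≤ (j:ℝ) := by positivity
            linarith
          calc ENNReal.ofReal (Real.log ((n:ℝ)+j+1) - Real.log ((n:ℝ)+j))
              ≤ ENNReal.ofReal 1 := ENNReal.ofReal_le_ofReal (by linarith)
            _ = 1 := ENNReal.ofReal_one
        calc ENNReal.ofReal (Real.log ((n:ℝ)+j+1) - Real.log ((n:ℝ)+j))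
              * ν (Set.Ici (((n+j:ℕ):ℝ)) ∩ s)
            ≤ 1 * ν (Set.Ici (((n+j:ℕ):ℝ))) :=
              mul_le_mul' h1 (measure_mono Set.inter_subset_left)
          _ = ν (Set.Ici (((n+j:ℕ):ℝ))) := one_mul _
          _ ≤ 4 * (2⁻¹:ℝ≥0∞)^(n+j) := mass_Ici_le hν hα (n+j)
      calc ∑' j:ℕ, ∫⁻ x in s, (Set.Ici (((n+j:ℕ):ℝ))).indicator
            (fun _ => ENNReal.ofReal (Real.log ((n:ℝ)+j+1) - Real.log ((n:ℝ)+j))) x ∂ν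
          ≤ ∑' j:ℕ, 4 * (2⁻¹:ℝ≥0∞)^(n+j) := ENNReal.tsum_le_tsum hj
        _ = (4 * (2⁻¹:ℝ≥0∞)^n) * ∑' j:ℕ, (2⁻¹:ℝ≥0∞)^j := by
            rw [← ENNReal.tsum_mul_left]
            congr 1; funext j; rw [pow_add]; ring
        _ = 2 * (4 * (2⁻¹:ℝ≥0∞)^n) := by rw [tsum_half_geo]; ring
    calc ∫⁻ _ in s, ENNReal.ofReal (Real.log n) ∂ν + _ 
        ≤ (n:ℝ≥0∞) * (4 * (2⁻¹:ℝ≥0∞)^n) + 2 * (4 * (2⁻¹:ℝ≥0∞)^n) := by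
          rw [hconst]
          exact add_le_add hconst_le htsum
      _ = ((n:ℝ≥0∞) + 2) * (4 * (2⁻¹:ℝ≥0∞)^n) := by ring
  exact le_trans step1 step2

omit hα in
lemma restrict_Ici_eq : ν.restrict (Set.Ici (0:ℝ)) = ν := by
  apply Measure.restrict_eq_self_of_ae_mem
  have h : ν (Set.Ici (0:ℝ))ᶜ = 0 := by rw [Set.compl_Ici]; exact hν.2.1
  exact (MeasureTheory.ae_iff).mpr h

lemma integrable_log : Integrable Real.log ν := by
  constructor
  · exact Real.measurable_log.aestronglyMeasurable
  · rw [hasFiniteIntegral_iff_norm]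
    have h0 : ∫⁻ x, ENNReal.ofReal ‖Real.log x‖ ∂ν
        = ∫⁻ x in Set.Ici (0:ℝ), ENNReal.ofReal ‖Real.log x‖ ∂ν := by
      rw [restrict_Ici_eq hν]
    rw [h0]
    have hsplit : Set.Ici (0:ℝ) = Set.Icc (0:ℝ) 1 ∪ Set.Ici (1:ℝ) :=
      (Set.Icc_union_Ici_eq_Ici zero_le_one).symm
    rw [hsplit]
    have h2 := lintegral_union_le (μ := ν) (fun x => ENNReal.ofReal ‖Real.log x‖)
      (Set.Icc (0:ℝ) 1) (Set.Ici (1:ℝ))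
    apply lt_of_le_of_lt h2
    have hIcc : Set.Icc (0:ℝ) 1 = Set.Icc (0:ℝ) (1/((1:ℕ):ℝ)) := by norm_num
    have hIci : Set.Ici (1:ℝ) = Set.Ici (((1:ℕ):ℝ)) := by norm_num
    rw [hIcc, hIci]
    have t1 := tail_Icc hν hα 1 le_rfl
    have t2 := tail_Ici hν hα 1 le_rfl
    have : ((1:ℕ):ℝ≥0∞) + 2 ≠ ⊤ := by simp
    apply lt_of_le_of_lt (add_le_add t1 t2)
    have hne : (((1:ℕ):ℝ≥0∞) + 2) * (4 * 2⁻¹ ^ 1) ≠ ⊤ := by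
      apply ENNReal.mul_ne_top (by simp)
      apply ENNReal.mul_ne_top (by simp)
      simp [ENNReal.inv_ne_top]
    exact ENNReal.add_lt_top.mpr ⟨hne.lt_top, hne.lt_top⟩

end Tails2
end SBX

namespace SBX
section ALayer
open scoped ENNReal

def A (α : ℝ) : ℕ → List Bool → ℝ
  | 0, w => Real.log (med (sb w)) * P α w
  | (k+1), w => A α k (w ++ [true]) + A α k (w ++ [false])

lemma A_zero (α : ℝ) (w : List Bool) : A α 0 w = Real.log (med (sb w)) * P α w := rfl

lemma A_succ (α : ℝ) (k : ℕ) (w : List Bool) :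
    A α (k+1) w = A α k (w ++ [true]) + A α k (w ++ [false]) := rfl

lemma continuous_fac (r : ℕ) (b : Bool) : Continuous (fun α : ℝ => fac α r b) := by
  cases b <;> by_cases h : Odd r <;> simp only [fac, fseq, if_pos, h, if_neg, if_true, if_false] <;>
    fun_prop

lemma continuous_Pa (w : List Bool) : ∀ r : ℕ, Continuous (fun α : ℝ => Pa α r w) := by
  induction w with
  | nil =>
      intro r
      simp only [Pa]
      exact continuous_const
  | cons b t ih =>
      intro r
      simp only [Pa]
      exact (continuous_fac r b).mul (ih (r+1))

lemma continuous_A (k : ℕ) : ∀ w : List Bool, Continuous (fun α : ℝ => A α k w) := by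
  induction k with
  | zero =>
      intro w
      simp only [A_zero]
      exact continuous_const.mul (continuous_Pa w 0)
  | succ k ih =>
      intro w
      simp only [A_succ]
      exact (ih (w ++ [true])).add (ih (w ++ [false]))

lemma sbSet_eq_Icc {I : (ℕ × ℕ) × (ℕ × ℕ)} (hd : I.2.2 ≠ 0) :
    sbSet I = Set.Icc (lE I) (rE I) := by
  obtain ⟨⟨a, b⟩, c, d⟩ := I
  simp only at hd
  rw [sbSet_def, if_neg hd]; rfl

lemma step_true_a (I : (ℕ × ℕ) × (ℕ × ℕ)) : (step I true).1.1 = I.1.1 := by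
  obtain ⟨⟨a, b⟩, c, d⟩ := I; rfl
lemma step_true_d (I : (ℕ × ℕ) × (ℕ × ℕ)) : (step I true).2.2 = I.1.2 + I.2.2 := by
  obtain ⟨⟨a, b⟩, c, d⟩ := I; rfl
lemma step_false_a (I : (ℕ × ℕ) × (ℕ × ℕ)) : (step I false).1.1 = I.1.1 + I.2.1 := by
  obtain ⟨⟨a, b⟩, c, d⟩ := I; rfl
lemma step_false_d (I : (ℕ × ℕ) × (ℕ × ℕ)) : (step I false).2.2 = I.2.2 := by
  obtain ⟨⟨a, b⟩, c, d⟩ := I; rfl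

lemma nat_succ_le_pow32 (n : ℕ) : ((n:ℝ)+1) ≤ 2 * (3/2:ℝ)^n := by
  have h := one_add_mul_le_pow (a := (1/2:ℝ)) (by norm_num) n
  have h2 : (1 + 1/2 : ℝ) = 3/2 := by norm_num
  rw [h2] at h
  nlinarith [h]

lemma ennreal_pow_toReal (n : ℕ) :
    ((((n:ℕ):ℝ≥0∞)+2) * (4 * (2⁻¹:ℝ≥0∞)^n)).toReal = ((n:ℝ)+2)*(4*(2⁻¹:ℝ)^n) := by
  rw [ENNReal.toReal_mul, ENNReal.toReal_add (by simp) (by simp), ENNReal.toReal_mul,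
    ENNReal.toReal_pow, ENNReal.toReal_inv]
  norm_num

end ALayer
end SBX

namespace SBX
section BLayer
open scoped ENNReal

variable {α : ℝ} {ν : Measure ℝ}

lemma bound_ne_top (n : ℕ) : ((((n:ℕ):ℝ≥0∞)+2) * (4 * (2⁻¹:ℝ≥0∞)^n)) ≠ ⊤ := by
  apply ENNReal.mul_ne_top
  · exact ENNReal.add_ne_top.mpr ⟨ENNReal.natCast_ne_top n, by simp⟩
  · apply ENNReal.mul_ne_top (by simp)
    exact ENNReal.pow_ne_top (ENNReal.inv_ne_top.mpr (by simp))

lemma P_nonneg (hα : α ∈ Set.Icc (0:ℝ) 1) (w : List Bool) : 0 ≤ P α w := Pa_nonneg hα 0 w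

variable (hν : IsSternBrocotMeasure α ν) (hα : α ∈ Set.Icc (0:ℝ) 1)
include hν hα

lemma SIn_split (w : List Bool) :
    ∫ x in sbSet (sb w), Real.log x ∂ν
      = ∫ x in sbSet (sb (w ++ [true])), Real.log x ∂ν
        + ∫ x in sbSet (sb (w ++ [false])), Real.log x ∂ν := by
  have hu : sbSet (sb w) = sbSet (sb (w ++ [true])) ∪ sbSet (sb (w ++ [false])) := by
    rw [sb_concat, sb_concat]; exact sbSet_eq_union (inv_sb w)
  have hmed : ν {med (sb w)} = 0 := by
    rw [show med (sb w) = lE (sb (w ++ [false])) from by rw [sb_concat, lE_step_false]]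
    exact atom_null hν hα (w ++ [false])
  have hdisj : MeasureTheory.AEDisjoint ν (sbSet (sb (w ++ [true]))) (sbSet (sb (w ++ [false]))) := by
    have hsub : sbSet (sb (w ++ [true])) ∩ sbSet (sb (w ++ [false])) ⊆ {med (sb w)} := by
      rw [sb_concat, sb_concat]; exact sbSet_inter_subset (inv_sb w)
    exact le_antisymm (le_trans (measure_mono hsub) (le_of_eq hmed)) zero_le
  rw [hu]
  exact integral_union_ae hdisj (measurableSet_sbSet _).nullMeasurableSet
    ((integrable_log hν hα).integrableOn) ((integrable_log hν hα).integrableOn)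

lemma leaf_mid (w : List Bool) (hw : 1 ≤ w.length)
    (ha : 1 ≤ (sb w).1.1) (hd : 1 ≤ (sb w).2.2) :
    |(∫ x in sbSet (sb w), Real.log x ∂ν) - Real.log (med (sb w)) * P α w|
      ≤ (4 / (w.length : ℝ)) * P α w := by
  haveI := hν.1
  have hI := inv_sb w
  have hb := hI.b_pos
  have hc := hI.c_pos
  have hdne : (sb w).2.2 ≠ 0 := by omega
  have hset : sbSet (sb w) = Set.Icc (lE (sb w)) (rE (sb w)) := sbSet_eq_Icc hdne
  have ha' : (0:ℝ) < ((sb w).1.1 : ℝ) := by exact_mod_cast Nat.lt_of_lt_of_le Nat.zero_lt_one ha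
  have hb' : (0:ℝ) < ((sb w).1.2 : ℝ) := by exact_mod_cast hb
  have hc' : (0:ℝ) < ((sb w).2.1 : ℝ) := by exact_mod_cast hc
  have hd' : (0:ℝ) < ((sb w).2.2 : ℝ) := by exact_mod_cast Nat.lt_of_lt_of_le Nat.zero_lt_one hd
  have hlo : (0:ℝ) < lE (sb w) := div_pos ha' hb'
  have hmed1 : lE (sb w) ≤ med (sb w) := lE_le_med hI
  have hmed2 : med (sb w) ≤ rE (sb w) := med_le_rE hI (by omega)
  have hq : (1:ℝ) ≤ ((sb w).1.1:ℝ) * ((sb w).2.2:ℝ) := by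
    have : (1:ℕ) ≤ (sb w).1.1 * (sb w).2.2 := Nat.one_le_iff_ne_zero.mpr (by positivity)
    exact_mod_cast this
  have hosc : Real.log (rE (sb w)) - Real.log (lE (sb w))
      ≤ 1/(((sb w).1.1:ℝ) * ((sb w).2.2:ℝ)) := by
    have hInv : ((sb w).1.1:ℝ) * ((sb w).2.2:ℝ) + 1 = ((sb w).1.2:ℝ) * ((sb w).2.1:ℝ) := by
      exact_mod_cast hI
    have hIdent : Real.log (rE (sb w)) - Real.log (lE (sb w))
        = Real.log (((sb w).1.1:ℝ) * ((sb w).2.2:ℝ) + 1)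
          - Real.log (((sb w).1.1:ℝ) * ((sb w).2.2:ℝ)) := by
      rw [rE, lE, Real.log_div (ne_of_gt hc') (ne_of_gt hd'),
        Real.log_div (ne_of_gt ha') (ne_of_gt hb'), hInv,
        Real.log_mul (ne_of_gt hb') (ne_of_gt hc'),
        Real.log_mul (ne_of_gt ha') (ne_of_gt hd')]
      ring
    rw [hIdent]
    exact log_diff_le _ hq
  have hosclen : 1/(((sb w).1.1:ℝ) * ((sb w).2.2:ℝ)) ≤ 4/(w.length:ℝ) := by
    have hlen := length_le_ad (w := w) ha hd
    have h1 : (w.length:ℝ) ≤ 4*(((sb w).1.1:ℝ) * ((sb w).2.2:ℝ)) := by exact_mod_cast hlen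
    have hw' : (0:ℝ) < (w.length:ℝ) := by exact_mod_cast hw
    rw [div_le_div_iff₀ (by positivity) hw']
    linarith
  have hpt : ∀ᵐ x ∂(ν.restrict (sbSet (sb w))),
      ‖Real.log x - Real.log (med (sb w))‖
        ≤ Real.log (rE (sb w)) - Real.log (lE (sb w)) := by
    rw [hset]
    filter_upwards [ae_restrict_mem measurableSet_Icc] with x hx
    obtain ⟨hx1, hx2⟩ := hx
    have hx0 : (0:ℝ) < x := lt_of_lt_of_le hlo hx1
    have l1 : Real.log (lE (sb w)) ≤ Real.log x := Real.log_le_log hlo hx1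
    have l2 : Real.log x ≤ Real.log (rE (sb w)) := Real.log_le_log hx0 hx2
    have l3 : Real.log (lE (sb w)) ≤ Real.log (med (sb w)) := Real.log_le_log hlo hmed1
    have l4 : Real.log (med (sb w)) ≤ Real.log (rE (sb w)) :=
      Real.log_le_log (lt_of_lt_of_le hlo hmed1) hmed2
    rw [Real.norm_eq_abs, abs_sub_le_iff]
    constructor <;> linarith
  have hkey := norm_integral_le_of_norm_le_const hpt
  have hmass : ((ν.restrict (sbSet (sb w))).real Set.univ) = P α w := by
    rw [measureReal_def, Measure.restrict_apply_univ, mass_eq_P hν hα, ENNReal.toReal_ofReal (P_nonneg hα w)]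
  have hsub : (∫ x in sbSet (sb w), (Real.log x - Real.log (med (sb w))) ∂ν)
      = (∫ x in sbSet (sb w), Real.log x ∂ν) - Real.log (med (sb w)) * P α w := by
    rw [integral_sub ((integrable_log hν hα).integrableOn) (integrable_const _), integral_const,
      measureReal_def, Measure.restrict_apply_univ, mass_eq_P hν hα,
      ENNReal.toReal_ofReal (P_nonneg hα w), smul_eq_mul]
    ring
  rw [hmass] at hkey
  rw [hsub, Real.norm_eq_abs] at hkey
  calc |(∫ x in sbSet (sb w), Real.log x ∂ν) - Real.log (med (sb w)) * P α w|
      ≤ (Real.log (rE (sb w)) - Real.log (lE (sb w))) * P α w := hkey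
    _ ≤ (4 / (w.length:ℝ)) * P α w :=
        mul_le_mul_of_nonneg_right (le_trans hosc hosclen) (P_nonneg hα w)

lemma A_mid (k : ℕ) : ∀ w : List Bool, 1 ≤ w.length → 1 ≤ (sb w).1.1 → 1 ≤ (sb w).2.2 →
    |(∫ x in sbSet (sb w), Real.log x ∂ν) - A α k w|
      ≤ (4 / ((w.length:ℝ) + (k:ℝ))) * P α w := by
  induction k with
  | zero =>
      intro w hw ha hd
      rw [A_zero]
      simpa using leaf_mid hν hα w hw ha hd
  | succ k ih =>
      intro w hw ha hd
      have hb := (inv_sb w).b_pos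
      have haT : 1 ≤ (sb (w ++ [true])).1.1 := by rw [sb_concat, step_true_a]; exact ha
      have hdT : 1 ≤ (sb (w ++ [true])).2.2 := by rw [sb_concat, step_true_d]; omega
      have haF : 1 ≤ (sb (w ++ [false])).1.1 := by rw [sb_concat, step_false_a]; omega
      have hdF : 1 ≤ (sb (w ++ [false])).2.2 := by rw [sb_concat, step_false_d]; exact hd
      have h1 := ih (w ++ [true]) (by simp) haT hdT
      have h2 := ih (w ++ [false]) (by simp) haF hdF
      rw [SIn_split hν hα w, A_succ]
      have hlenT : (((w ++ [true]).length : ℕ) : ℝ) = (w.length:ℝ) + 1 := by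
        simp
      have hlenF : (((w ++ [false]).length : ℕ) : ℝ) = (w.length:ℝ) + 1 := by
        simp
      rw [hlenT] at h1; rw [hlenF] at h2
      have hPsum : P α (w ++ [true]) + P α (w ++ [false]) = P α w := by
        rw [P_concat, P_concat, ← mul_add, fac_add_fac, mul_one]
      have he : (∫ x in sbSet (sb (w ++ [true])), Real.log x ∂ν)
            + (∫ x in sbSet (sb (w ++ [false])), Real.log x ∂ν)
            - (A α k (w ++ [true]) + A α k (w ++ [false]))
          = ((∫ x in sbSet (sb (w ++ [true])), Real.log x ∂ν) - A α k (w ++ [true]))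
            + ((∫ x in sbSet (sb (w ++ [false])), Real.log x ∂ν) - A α k (w ++ [false])) := by
        ring
      rw [he]
      refine le_trans (abs_add_le _ _) ?_
      have harith : (4 / ((w.length:ℝ) + 1 + (k:ℝ))) * P α (w ++ [true])
            + (4 / ((w.length:ℝ) + 1 + (k:ℝ))) * P α (w ++ [false])
          = (4 / ((w.length:ℝ) + ((k:ℕ)+1:ℕ))) * P α w := by
        rw [← mul_add, hPsum]
        congr 1
        push_cast
        ring_nf
      rw [← harith]
      exact add_le_add h1 h2

end BLayer
end SBX

namespace SBX
section SLayer
open scoped ENNReal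

variable {α : ℝ} {ν : Measure ℝ}
variable (hν : IsSternBrocotMeasure α ν) (hα : α ∈ Set.Icc (0:ℝ) 1)
include hν hα

lemma spine_S_bound_T (n : ℕ) (hn : 1 ≤ n) :
    |∫ x in sbSet (sb (List.replicate n true)), Real.log x ∂ν|
      ≤ ((n:ℝ)+2)*(4*(2⁻¹:ℝ)^n) := by
  rw [sbSet_repT n hn]
  have h1 := norm_integral_le_lintegral_norm
    (μ := ν.restrict (Set.Icc (0:ℝ) (1/(n:ℝ)))) Real.log
  rw [Real.norm_eq_abs] at h1
  refine le_trans h1 ?_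
  rw [← ennreal_pow_toReal n]
  exact ENNReal.toReal_mono (bound_ne_top n) (tail_Icc hν hα n hn)

lemma spine_S_bound_F (n : ℕ) (hn : 1 ≤ n) :
    |∫ x in sbSet (sb (List.replicate n false)), Real.log x ∂ν|
      ≤ ((n:ℝ)+2)*(4*(2⁻¹:ℝ)^n) := by
  rw [sbSet_repF n]
  have h1 := norm_integral_le_lintegral_norm
    (μ := ν.restrict (Set.Ici ((n:ℝ)))) Real.log
  rw [Real.norm_eq_abs] at h1
  refine le_trans h1 ?_
  rw [← ennreal_pow_toReal n]
  exact ENNReal.toReal_mono (bound_ne_top n) (tail_Ici hν hα n hn)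

omit hν hα in
lemma med_repT (n : ℕ) : med (sb (List.replicate n true)) = 1/((n:ℝ)+1) := by
  rw [sb_repT, med]
  push_cast
  rw [add_comm (1:ℝ)]

omit hν hα in
lemma med_repF (n : ℕ) : med (sb (List.replicate n false)) = (n:ℝ)+1 := by
  rw [sb_repF, med]
  push_cast
  norm_num

omit hν hα in
lemma log_med_rep_le {n : ℕ} {b : Bool} (hn : 1 ≤ n) :
    |Real.log (med (sb (List.replicate n b)))| ≤ (n:ℝ) := by
  have hpos : (0:ℝ) < (n:ℝ)+1 := by positivity
  have hlog : (0:ℝ) ≤ Real.log ((n:ℝ)+1) := Real.log_nonneg (by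
    have : (1:ℝ) ≤ (n:ℝ) := by exact_mod_cast hn
    linarith)
  have hle : Real.log ((n:ℝ)+1) ≤ (n:ℝ) := by
    have := Real.log_le_sub_one_of_pos hpos
    linarith
  cases b
  · rw [med_repF, abs_of_nonneg hlog]; exact hle
  · rw [med_repT, one_div, Real.log_inv, abs_neg, abs_of_nonneg hlog]; exact hle

omit hν hα in
lemma leaf_spine_arith {S L Pw q : ℝ} (n : ℕ) (hn : 1 ≤ n) (hq : q = (2⁻¹:ℝ)^n)
    (hS : |S| ≤ ((n:ℝ)+2)*(4*q)) (hL : |L| ≤ (n:ℝ)) (hP : Pw ≤ 4*q) (hP0 : 0 ≤ Pw) :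
    |S - L * Pw| ≤ 200 * (3/4:ℝ)^n := by
  have hq0 : (0:ℝ) ≤ q := by rw [hq]; positivity
  have habs : |S - L * Pw| ≤ |S| + |L| * Pw := by
    rw [sub_eq_add_neg]
    refine le_trans (abs_add_le _ _) ?_
    rw [abs_neg, abs_mul, abs_of_nonneg hP0]
  have hL0 : (0:ℝ) ≤ |L| := abs_nonneg _
  have h5 : |L| * Pw ≤ (n:ℝ) * (4*q) := by
    apply mul_le_mul hL hP hP0
    positivity
  have key : |S - L * Pw| ≤ (8*(n:ℝ)+8) * q := by
    have := add_le_add hS h5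
    calc |S - L * Pw| ≤ |S| + |L| * Pw := habs
      _ ≤ ((n:ℝ)+2)*(4*q) + (n:ℝ)*(4*q) := this
      _ = (8*(n:ℝ)+8)*q := by ring
  have hber := nat_succ_le_pow32 n
  have h6 : (3/2:ℝ)^n * (2⁻¹:ℝ)^n = (3/4:ℝ)^n := by
    rw [← mul_pow]; norm_num
  have h8 : ((n:ℝ)+1) * q ≤ 2*(3/2:ℝ)^n * q :=
    mul_le_mul_of_nonneg_right hber hq0
  calc |S - L * Pw| ≤ (8*(n:ℝ)+8)*q := key
    _ = 8*(((n:ℝ)+1)*q) := by ring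
    _ ≤ 8*(2*(3/2:ℝ)^n*q) := by linarith
    _ = 16*((3/2:ℝ)^n * (2⁻¹:ℝ)^n) := by rw [hq]; ring
    _ = 16*(3/4:ℝ)^n := by rw [h6]
    _ ≤ 200*(3/4:ℝ)^n := by
        have : (0:ℝ) ≤ (3/4:ℝ)^n := by positivity
        linarith

lemma A_spine (b : Bool) (k : ℕ) : ∀ n : ℕ, 1 ≤ n →
    |(∫ x in sbSet (sb (List.replicate n b)), Real.log x ∂ν) - A α k (List.replicate n b)|
      ≤ 200 * (3/4:ℝ)^(n+k) + (4 / ((n:ℝ)+(k:ℝ))) * (32 * (2⁻¹:ℝ)^n) := by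
  induction k with
  | zero =>
      intro n hn
      rw [A_zero]
      have hS : |∫ x in sbSet (sb (List.replicate n b)), Real.log x ∂ν|
          ≤ ((n:ℝ)+2)*(4*(2⁻¹:ℝ)^n) := by
        cases b
        · exact spine_S_bound_F hν hα n hn
        · exact spine_S_bound_T hν hα n hn
      have hmain := leaf_spine_arith n hn rfl hS (log_med_rep_le (b := b) hn)
        (P_replicate_le hα b n) (P_nonneg hα _)
      have hpos2 : (0:ℝ) ≤ (4 / ((n:ℝ)+(0:ℝ))) * (32 * (2⁻¹:ℝ)^n) := by
        have hn' : (0:ℝ) < (n:ℝ) := by exact_mod_cast hn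
        positivity
      calc |(∫ x in sbSet (sb (List.replicate n b)), Real.log x ∂ν)
            - Real.log (med (sb (List.replicate n b))) * P α (List.replicate n b)|
          ≤ 200 * (3/4:ℝ)^n := hmain
        _ ≤ 200 * (3/4:ℝ)^(n+0) + (4 / ((n:ℝ)+((0:ℕ):ℝ))) * (32 * (2⁻¹:ℝ)^n) := by
            rw [Nat.add_zero]
            push_cast
            linarith
  | succ k ih =>
      intro n hn
      have hD : (0:ℝ) < (n:ℝ)+(k:ℝ)+1 := by positivity
      have ht0 : (0:ℝ) ≤ 4/((n:ℝ)+(k:ℝ)+1) := by positivity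
      have hq0 : (0:ℝ) ≤ (2⁻¹:ℝ)^n := by positivity
      have hexp : (n+1)+k = n+(k+1) := by omega
      have h1 := ih (n+1) (by omega)
      rw [hexp] at h1
      push_cast at h1
      cases b
      · -- b = false : right spine, mid child is w ++ [true]
        have hrepF : List.replicate n false ++ [false] = List.replicate (n+1) false := by
          rw [← List.replicate_succ']
        have haT : 1 ≤ (sb (List.replicate n false ++ [true])).1.1 := by
          rw [sb_concat, step_true_a, sb_repF]; exact hn
        have hdT : 1 ≤ (sb (List.replicate n false ++ [true])).2.2 := by
          rw [sb_concat, step_true_d, sb_repF]; norm_num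
        have h2 := A_mid hν hα k (List.replicate n false ++ [true]) (by simp) haT hdT
        have hlen : ((List.replicate n false ++ [true]).length : ℝ) = (n:ℝ)+1 := by simp
        rw [hlen] at h2
        push_cast at h2
        have hP2 : P α (List.replicate n false ++ [true]) ≤ 4*(2⁻¹:ℝ)^n :=
          le_trans (P_concat_le hα _ _) (P_replicate_le hα false n)
        have hP20 : 0 ≤ P α (List.replicate n false ++ [true]) := P_nonneg hα _
        rw [SIn_split hν hα (List.replicate n false), A_succ]
        rw [hrepF]
        have he : (∫ x in sbSet (sb (List.replicate n false ++ [true])), Real.log x ∂ν)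
              + (∫ x in sbSet (sb (List.replicate (n+1) false)), Real.log x ∂ν)
              - (A α k (List.replicate n false ++ [true]) + A α k (List.replicate (n+1) false))
            = ((∫ x in sbSet (sb (List.replicate (n+1) false)), Real.log x ∂ν)
                - A α k (List.replicate (n+1) false))
              + ((∫ x in sbSet (sb (List.replicate n false ++ [true])), Real.log x ∂ν)
                - A α k (List.replicate n false ++ [true])) := by ring
        rw [he]
        refine le_trans (abs_add_le _ _) ?_
        refine le_trans (add_le_add h1 h2) ?_
        push_cast
        have hps : (2⁻¹:ℝ)^(n+1) = (2⁻¹:ℝ)^n * 2⁻¹ := pow_succ _ _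
        have hcomb : (4/((n:ℝ)+1+k)) * (32*(2⁻¹:ℝ)^(n+1))
              + (4/((n:ℝ)+1+k)) * P α (List.replicate n false ++ [true])
            ≤ (4/((n:ℝ)+1+k)) * (32*(2⁻¹:ℝ)^n) := by
          rw [← mul_add]
          apply mul_le_mul_of_nonneg_left _ (by positivity)
          rw [hps]
          linarith
        have hde : ((n:ℝ)+1)+k = (n:ℝ)+(k+1) := by ring
        rw [hde] at hcomb ⊢
        linarith
      · -- b = true : left spine, mid child is w ++ [false]
        have hrepT : List.replicate n true ++ [true] = List.replicate (n+1) true := by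
          rw [← List.replicate_succ']
        have haF : 1 ≤ (sb (List.replicate n true ++ [false])).1.1 := by
          rw [sb_concat, step_false_a, sb_repT]; norm_num
        have hdF : 1 ≤ (sb (List.replicate n true ++ [false])).2.2 := by
          rw [sb_concat, step_false_d, sb_repT]; exact hn
        have h2 := A_mid hν hα k (List.replicate n true ++ [false]) (by simp) haF hdF
        have hlen : ((List.replicate n true ++ [false]).length : ℝ) = (n:ℝ)+1 := by simp
        rw [hlen] at h2
        push_cast at h2
        have hP2 : P α (List.replicate n true ++ [false]) ≤ 4*(2⁻¹:ℝ)^n :=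
          le_trans (P_concat_le hα _ _) (P_replicate_le hα true n)
        have hP20 : 0 ≤ P α (List.replicate n true ++ [false]) := P_nonneg hα _
        rw [SIn_split hν hα (List.replicate n true), A_succ]
        rw [hrepT]
        have he : (∫ x in sbSet (sb (List.replicate (n+1) true)), Real.log x ∂ν)
              + (∫ x in sbSet (sb (List.replicate n true ++ [false])), Real.log x ∂ν)
              - (A α k (List.replicate (n+1) true) + A α k (List.replicate n true ++ [false]))
            = ((∫ x in sbSet (sb (List.replicate (n+1) true)), Real.log x ∂ν)
                - A α k (List.replicate (n+1) true))
              + ((∫ x in sbSet (sb (List.replicate n true ++ [false])), Real.log x ∂ν)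
                - A α k (List.replicate n true ++ [false])) := by ring
        rw [he]
        refine le_trans (abs_add_le _ _) ?_
        refine le_trans (add_le_add h1 h2) ?_
        push_cast
        have hps : (2⁻¹:ℝ)^(n+1) = (2⁻¹:ℝ)^n * 2⁻¹ := pow_succ _ _
        have hcomb : (4/((n:ℝ)+1+k)) * (32*(2⁻¹:ℝ)^(n+1))
              + (4/((n:ℝ)+1+k)) * P α (List.replicate n true ++ [false])
            ≤ (4/((n:ℝ)+1+k)) * (32*(2⁻¹:ℝ)^n) := by
          rw [← mul_add]
          apply mul_le_mul_of_nonneg_left _ (by positivity)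
          rw [hps]
          linarith
        have hde : ((n:ℝ)+1)+k = (n:ℝ)+(k+1) := by ring
        rw [hde] at hcomb ⊢
        linarith

end SLayer
end SBX

namespace SBX
section Root
open scoped ENNReal

variable {α : ℝ} {ν : Measure ℝ}
variable (hν : IsSternBrocotMeasure α ν) (hα : α ∈ Set.Icc (0:ℝ) 1)
include hν hα

lemma root_bound (r : ℕ) (hr : 1 ≤ r) :
    |(∫ x, Real.log x ∂ν) - A α r []| ≤ 400 * (3/4:ℝ)^r + 128 / (r:ℝ) := by
  obtain ⟨s, rfl⟩ : ∃ s, r = s + 1 := ⟨r-1, by omega⟩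
  have h0 : (∫ x, Real.log x ∂ν) = ∫ x in sbSet (sb []), Real.log x ∂ν := by
    rw [sbSet_nil]
    rw [show (∫ x in Set.Ici (0:ℝ), Real.log x ∂ν) = ∫ x, Real.log x ∂(ν.restrict (Set.Ici 0))
      from rfl, restrict_Ici_eq hν]
  rw [h0, SIn_split hν hα [], A_succ]
  have e1 : ([] : List Bool) ++ [true] = List.replicate 1 true := rfl
  have e2 : ([] : List Bool) ++ [false] = List.replicate 1 false := rfl
  rw [e1, e2]
  have h1 := A_spine hν hα true s 1 le_rfl
  have h2 := A_spine hν hα false s 1 le_rfl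
  have he : (∫ x in sbSet (sb (List.replicate 1 true)), Real.log x ∂ν)
        + (∫ x in sbSet (sb (List.replicate 1 false)), Real.log x ∂ν)
        - (A α s (List.replicate 1 true) + A α s (List.replicate 1 false))
      = ((∫ x in sbSet (sb (List.replicate 1 true)), Real.log x ∂ν)
          - A α s (List.replicate 1 true))
        + ((∫ x in sbSet (sb (List.replicate 1 false)), Real.log x ∂ν)
          - A α s (List.replicate 1 false)) := by ring
  rw [he]
  refine le_trans (abs_add_le _ _) (le_trans (add_le_add h1 h2) ?_)
  have hs0 : (0:ℝ) < (1:ℝ) + s := by positivity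
  have hpow : ((1:ℕ):ℝ) = 1 := by norm_num
  push_cast
  have hexp : 1 + s = s + 1 := by omega
  rw [hexp]
  have : (4 / (1 + (s:ℝ))) * (32 * (2⁻¹:ℝ)^1) = 64 / ((s:ℝ)+1) := by
    rw [pow_one]
    field_simp
    ring
  rw [this]
  have h128 : 64 / ((s:ℝ)+1) + 64 / ((s:ℝ)+1) = 128 / ((s:ℝ)+1) := by ring
  linarith

end Root
end SBX


/-- For every `α ∈ [0,1]` the function `log` is `ν_α`-integrable, and
`γ(α) = ∫ log x dν_α(x)` is continuous on `[0,1]`. -/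
theorem gamma_integrable_and_continuousOn
    (ν : ℝ → Measure ℝ) (hν : ∀ α ∈ Set.Icc (0 : ℝ) 1, IsSternBrocotMeasure α (ν α)) :
    (∀ α ∈ Set.Icc (0 : ℝ) 1, Integrable Real.log (ν α)) ∧
    ContinuousOn (fun α => ∫ x, Real.log x ∂(ν α)) (Set.Icc (0 : ℝ) 1) := by
  constructor
  · intro α hα
    exact SBX.integrable_log (hν α hα) hα
  · have hΔ : Tendsto (fun r : ℕ => 400*(3/4:ℝ)^r + 128/(r:ℝ)) atTop (𝓝 0) := by
      have t1 : Tendsto (fun r : ℕ => (3/4:ℝ)^r) atTop (𝓝 0) :=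
        tendsto_pow_atTop_nhds_zero_of_lt_one (by norm_num) (by norm_num)
      have t2 := tendsto_const_div_atTop_nhds_zero_nat (128:ℝ)
      have := (t1.const_mul (400:ℝ)).add t2
      simpa using this
    have hunif : TendstoUniformlyOn (fun r α => SBX.A α r [])
        (fun α => ∫ x, Real.log x ∂(ν α)) atTop (Set.Icc 0 1) := by
      rw [Metric.tendstoUniformlyOn_iff]
      intro ε hε
      have hev : ∀ᶠ r : ℕ in atTop, 400*(3/4:ℝ)^r + 128/(r:ℝ) < ε :=
        hΔ.eventually_lt_const hε
      filter_upwards [hev, eventually_ge_atTop 1] with r h1 h2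
      intro α' hα'
      rw [Real.dist_eq]
      exact lt_of_le_of_lt (SBX.root_bound (hν α' hα') hα' r h2) h1
    exact hunif.continuousOn
      (Filter.Eventually.of_forall (fun r => (SBX.continuous_A r []).continuousOn)).frequently
end
end
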